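/- arXiv:2404.06088 — 6 statements merged into one kernel-verified Lean document; each statement's English description precedes it below -/
import Mathlib

section
/- Let d ≥ 1 and n ≥ 3. For every nonzero vector η ∈ 𝔽₂^d and every subset I ⊆ [n] of odd cardinality, the lifted odd-set inequality associated with η and I defines a facet of the full cyclic transversal polytope CTP[d,n]: the set of points of CTP[d,n] satisfying Σ_{i ∈ I} Σ_{ω ∈ 𝔽₂^d, η·ω = 0} x^i_ω + Σ_{i ∈ [n]∖I} Σ_{ω ∈ 𝔽₂^d, η·ω = 1} x^i_ω = 1 has dimension n·(2^d − 1) − 1, one less than the dimension of CTP[d,n]. -/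
open scoped Classical

/-- The field `𝔽₂^d`, represented as functions `Fin d → ZMod 2`. -/
abbrev F2 (d : ℕ) : Type := Fin d → ZMod 2

/-- A cyclic transversal of a block configuration `B`. -/
def IsCyclicTransversal {d n : ℕ} (B : Fin n → Set (F2 d)) (ξ : Fin n → F2 d) : Prop :=
  (∀ i, ξ i ∈ B i) ∧ (∑ i, ξ i) = 0

/-- The incidence vector of a transversal. -/
noncomputable def incVec {d n : ℕ} (ξ : Fin n → F2 d) : Fin n → F2 d → ℝ :=
  fun i ω => if ξ i = ω then 1 else 0

/-- The cyclic transversal polytope of a block configuration. -/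
noncomputable def CTP {d n : ℕ} (B : Fin n → Set (F2 d)) : Set (Fin n → F2 d → ℝ) :=
  convexHull ℝ (incVec '' { ξ | IsCyclicTransversal B ξ })

/-- The transversal polytope of a block configuration. -/
def TP {d n : ℕ} (B : Fin n → Set (F2 d)) : Set (Fin n → F2 d → ℝ) :=
  { x | (∀ i ω, 0 ≤ x i ω) ∧ (∀ i ω, ω ∉ B i → x i ω = 0) ∧ ∀ i, (∑ ω : F2 d, x i ω) = 1 }

/-- The size of a block configuration. -/
noncomputable def blockSize {d n : ℕ} (B : Fin n → Set (F2 d)) : ℕ := ∑ i, (B i).ncard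

/-- The rank of a block configuration. -/
noncomputable def blockRank {d n : ℕ} (B : Fin n → Set (F2 d)) : ℕ :=
  Module.finrank (ZMod 2) (Submodule.span (ZMod 2) (⋃ i, B i))

/-- Two sets of real vectors are affinely isomorphic. -/
def AffIso {α β : Type*} [AddCommGroup α] [Module ℝ α] [AddCommGroup β] [Module ℝ β]
    (P : Set α) (Q : Set β) : Prop :=
  ∃ f : α →ᵃ[ℝ] β, Set.InjOn f P ∧ f '' P = Q

/-- The left-hand side of the lifted odd-set (LOS) inequality associated with `η` and `I`. -/
noncomputable def losLHS {d n : ℕ} (B : Fin n → Set (F2 d)) (η : F2 d) (I : Finset (Fin n))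
    (x : Fin n → F2 d → ℝ) : ℝ :=
  (∑ i ∈ I, ∑ ω ∈ Finset.univ.filter (fun ω : F2 d => ω ∈ B i ∧ (∑ j, η j * ω j) = 0), x i ω) +
  (∑ i ∈ Iᶜ, ∑ ω ∈ Finset.univ.filter (fun ω : F2 d => ω ∈ B i ∧ (∑ j, η j * ω j) = 1), x i ω)

namespace S9aux

variable {d n : ℕ}

/-- dot product over 𝔽₂ -/
def dotv (η ω : F2 d) : ZMod 2 := ∑ j, η j * ω j

def tI (I : Finset (Fin n)) (i : Fin n) : ZMod 2 := if i ∈ I then 1 else 0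

noncomputable def sC (η : F2 d) (I : Finset (Fin n)) (i : Fin n) (ω : F2 d) : ℝ :=
  if dotv η ω = tI I i + 1 then 1 else 0

lemma z2_eq (a b : ZMod 2) (h : a ≠ b + 1) : a = b := by revert a b; decide

lemma z2_ne (b : ZMod 2) : b + 1 ≠ b := by revert b; decide

lemma z2_ind (a b : ZMod 2) : (if a = b + 1 then (1 : ZMod 2) else 0) = a + b := by
  revert a b; decide

lemma z2_self (a : ZMod 2) : a + a = 0 := by revert a; decide

lemma F2_add_add (x y : F2 d) : x + (x + y) = y := by
  funext j; show x j + (x j + y j) = y j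
  rw [← add_assoc, z2_self, zero_add]

lemma F2_self (x : F2 d) : x + x = 0 := by
  funext j; exact z2_self (x j)

lemma dotv_add (η x y : F2 d) : dotv η (x + y) = dotv η x + dotv η y := by
  unfold dotv
  rw [← Finset.sum_add_distrib]
  exact Finset.sum_congr rfl fun j _ => by show η j * (x j + y j) = _; ring

lemma dotv_zero (η : F2 d) : dotv η 0 = 0 := by
  unfold dotv; simp

lemma dotv_sum (η : F2 d) {ι : Type*} (s : Finset ι) (f : ι → F2 d) :
    dotv η (∑ i ∈ s, f i) = ∑ i ∈ s, dotv η (f i) := by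
  classical
  induction s using Finset.induction with
  | empty => simp [dotv_zero]
  | @insert a s' h ih => simp [Finset.sum_insert h, dotv_add, ih]

noncomputable def gL (η : F2 d) (I : Finset (Fin n)) : (Fin n → F2 d → ℝ) →ₗ[ℝ] ℝ where
  toFun x := ∑ i, ∑ ω, sC η I i ω * x i ω
  map_add' x y := by
    simp only [Pi.add_apply, mul_add]
    rw [← Finset.sum_add_distrib]
    exact Finset.sum_congr rfl fun i _ => by rw [← Finset.sum_add_distrib]
  map_smul' c x := by
    simp only [Pi.smul_apply, smul_eq_mul, RingHom.id_apply]
    rw [Finset.mul_sum]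
    exact Finset.sum_congr rfl fun i _ => by rw [Finset.mul_sum]; exact Finset.sum_congr rfl fun ω _ => by ring

noncomputable def fL (i : Fin n) : (Fin n → F2 d → ℝ) →ₗ[ℝ] ℝ where
  toFun x := ∑ ω, x i ω
  map_add' x y := by simp [Finset.sum_add_distrib]
  map_smul' c x := by simp [Finset.mul_sum]

lemma losLHS_eq_gL (η : F2 d) (I : Finset (Fin n)) (x : Fin n → F2 d → ℝ) :
    losLHS (fun _ : Fin n => (Set.univ : Set (F2 d))) η I x = gL η I x := by
  show _ = ∑ i, ∑ ω, sC η I i ω * x i ω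
  rw [← Finset.sum_add_sum_compl I (fun i => ∑ ω, sC η I i ω * x i ω)]
  unfold losLHS
  congr 1
  · refine Finset.sum_congr rfl fun i hi => ?_
    rw [Finset.sum_filter]
    refine Finset.sum_congr rfl fun ω _ => ?_
    have : tI I i = 1 := by simp [tI, hi]
    simp only [sC, this, Set.mem_univ, true_and]
    have h2 : (1 : ZMod 2) + 1 = 0 := by decide
    rw [h2]
    show (if (dotv η ω = 0) then x i ω else 0) = (if dotv η ω = 0 then (1:ℝ) else 0) * x i ω
    split <;> simp
  · refine Finset.sum_congr rfl fun i hi => ?_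
    rw [Finset.sum_filter]
    refine Finset.sum_congr rfl fun ω _ => ?_
    have hi' : i ∉ I := Finset.mem_compl.mp hi
    have : tI I i = 0 := by simp [tI, hi']
    simp only [sC, this, Set.mem_univ, true_and, zero_add]
    show (if (dotv η ω = 1) then x i ω else 0) = (if dotv η ω = 1 then (1:ℝ) else 0) * x i ω
    split <;> simp


/-- the flip-count of a transversal -/
noncomputable def flipCount (η : F2 d) (I : Finset (Fin n)) (ξ : Fin n → F2 d) : ℕ :=
  (Finset.univ.filter (fun i => dotv η (ξ i) = tI I i + 1)).card

lemma gL_incVec (η : F2 d) (I : Finset (Fin n)) (ξ : Fin n → F2 d) :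
    gL η I (incVec ξ) = (flipCount η I ξ : ℝ) := by
  show (∑ i, ∑ ω, sC η I i ω * incVec ξ i ω) = _
  have h1 : ∀ i : Fin n, ∑ ω, sC η I i ω * incVec ξ i ω = sC η I i (ξ i) := by
    intro i
    rw [Finset.sum_eq_single (ξ i)]
    · simp [incVec]
    · intro ω _ hω
      simp [incVec, Ne.symm hω]
    · simp
  rw [Finset.sum_congr rfl fun i _ => h1 i]
  unfold sC flipCount
  rw [Finset.sum_boole]

lemma fL_incVec (i : Fin n) (ξ : Fin n → F2 d) : fL i (incVec ξ) = 1 := by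
  show (∑ ω, incVec ξ i ω) = 1
  rw [Finset.sum_eq_single (ξ i)] <;> simp [incVec]
  intro ω hω; simp [Ne.symm hω]

lemma card_I_cast (I : Finset (Fin n)) (hI : Odd I.card) : ((I.card : ZMod 2)) = 1 := by
  obtain ⟨m, hm⟩ := hI
  rw [hm]; push_cast
  rw [show ((2:ZMod 2)) = 0 by decide]; ring

lemma sum_tI (I : Finset (Fin n)) (hI : Odd I.card) : (∑ i, tI I i) = 1 := by
  unfold tI
  rw [Finset.sum_boole, Finset.filter_mem_eq_inter, Finset.univ_inter]
  exact card_I_cast I hI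

lemma flipCount_odd (η : F2 d) (I : Finset (Fin n)) (hI : Odd I.card)
    (ξ : Fin n → F2 d) (hξ : (∑ i, ξ i) = 0) : Odd (flipCount η I ξ) := by
  have key : ((flipCount η I ξ : ℕ) : ZMod 2) = 1 := by
    unfold flipCount
    rw [← Finset.sum_boole]
    have : ∀ i : Fin n, (if dotv η (ξ i) = tI I i + 1 then (1 : ZMod 2) else 0)
        = dotv η (ξ i) + tI I i := fun i => z2_ind _ _
    rw [Finset.sum_congr rfl fun i _ => this i, Finset.sum_add_distrib,
      ← dotv_sum η Finset.univ ξ, hξ, dotv_zero, zero_add, sum_tI I hI]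
  rw [Nat.odd_iff]
  have := (ZMod.natCast_eq_natCast_iff (flipCount η I ξ) 1 2).mp (by simpa using key)
  simpa [Nat.ModEq] using this

/-- The set of tight cyclic transversals. -/
def Tset (η : F2 d) (I : Finset (Fin n)) : Set (Fin n → F2 d) :=
  {ξ | IsCyclicTransversal (fun _ : Fin n => (Set.univ : Set (F2 d))) ξ ∧ flipCount η I ξ = 1}

/-- The vertex set of the face. -/
noncomputable def Vface (η : F2 d) (I : Finset (Fin n)) : Set (Fin n → F2 d → ℝ) :=
  incVec '' Tset η I

/-- the basic constructor: fix all coordinates except `q`, which absorbs the sum -/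
def mk (v : Fin n → F2 d) (q : Fin n) : Fin n → F2 d :=
  fun j => if j = q then ∑ j' ∈ Finset.univ.erase q, v j' else v j

lemma mk_apply_ne (v : Fin n → F2 d) (q : Fin n) {j : Fin n} (h : j ≠ q) : mk v q j = v j := by
  simp [mk, h]

lemma mk_cyclic (v : Fin n → F2 d) (q : Fin n) :
    IsCyclicTransversal (fun _ : Fin n => (Set.univ : Set (F2 d))) (mk v q) := by
  refine ⟨fun i => Set.mem_univ _, ?_⟩
  have := Finset.sum_erase_add Finset.univ (mk v q) (Finset.mem_univ q)
  rw [← this]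
  have h1 : ∑ j ∈ Finset.univ.erase q, mk v q j = ∑ j ∈ Finset.univ.erase q, v j :=
    Finset.sum_congr rfl fun j hj => mk_apply_ne v q (Finset.ne_of_mem_erase hj)
  have h2 : mk v q q = ∑ j ∈ Finset.univ.erase q, v j := by simp [mk]
  rw [h1, h2, F2_self]

lemma mk_dotv (η : F2 d) (v : Fin n → F2 d) (q : Fin n) (a : Fin n → ZMod 2)
    (ha0 : (∑ i, a i) = 0) (hv : ∀ j, j ≠ q → dotv η (v j) = a j) :
    ∀ j, dotv η (mk v q j) = a j := by
  intro j
  by_cases hj : j = q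
  · subst hj
    have h2 : mk v j j = ∑ j' ∈ Finset.univ.erase j, v j' := by
      unfold mk; rw [if_pos rfl]
    rw [h2, dotv_sum]
    have h3 : ∑ j' ∈ Finset.univ.erase j, dotv η (v j') = ∑ j' ∈ Finset.univ.erase j, a j' :=
      Finset.sum_congr rfl fun j' hj' => hv j' (Finset.ne_of_mem_erase hj')
    rw [h3]
    have h4 := Finset.sum_erase_add Finset.univ a (Finset.mem_univ j)
    rw [ha0] at h4
    have := z2_self (a j)
    -- from h4 : ∑_erase + a j = 0, conclude ∑_erase = a j
    have h5 : (∑ j' ∈ Finset.univ.erase j, a j') + (a j + a j) = a j := by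
      rw [← add_assoc, h4, zero_add]
    rwa [this, add_zero] at h5
  · rw [mk_apply_ne v q hj]; exact hv j hj

lemma mk_tight (η : F2 d) (I : Finset (Fin n)) (hI : Odd I.card)
    (v : Fin n → F2 d) (q p : Fin n) (a : Fin n → ZMod 2)
    (hap : ∀ j, a j = if j = p then tI I j + 1 else tI I j)
    (hv : ∀ j, j ≠ q → dotv η (v j) = a j) :
    mk v q ∈ Tset η I := by
  have ha0 : (∑ i, a i) = 0 := by
    rw [Finset.sum_congr rfl fun j _ => hap j]
    have : ∀ j : Fin n, (if j = p then tI I j + 1 else tI I j)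
        = tI I j + (if j = p then (1 : ZMod 2) else 0) := by
      intro j; split <;> simp
    rw [Finset.sum_congr rfl fun j _ => this j, Finset.sum_add_distrib, sum_tI I hI,
      Finset.sum_ite_eq' Finset.univ p (fun _ => (1 : ZMod 2)), if_pos (Finset.mem_univ p)]
    decide
  refine ⟨mk_cyclic v q, ?_⟩
  have hd := mk_dotv η v q a ha0 hv
  unfold flipCount
  have : Finset.univ.filter (fun i => dotv η (mk v q i) = tI I i + 1) = {p} := by
    ext i
    simp only [Finset.mem_filter, Finset.mem_univ, true_and, Finset.mem_singleton, hd i, hap i]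
    constructor
    · intro h
      by_contra hip
      rw [if_neg hip] at h
      exact z2_ne (tI I i) h.symm
    · intro h; rw [if_pos h]
  rw [this, Finset.card_singleton]


/-- unit vector in the ambient space -/
noncomputable def uv (i : Fin n) (ω : F2 d) : Fin n → F2 d → ℝ :=
  fun j τ => if j = i ∧ τ = ω then 1 else 0

lemma exists_dotv {η : F2 d} (hη : η ≠ 0) (c : ZMod 2) : ∃ ω : F2 d, dotv η ω = c := by
  have : ∃ j, η j ≠ 0 := by
    by_contra h
    push_neg at h
    exact hη (funext fun j => h j)
  obtain ⟨j, hj⟩ := this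
  have hj1 : η j = 1 := by
    have : ∀ a : ZMod 2, a ≠ 0 → a = 1 := by decide
    exact this _ hj
  refine ⟨fun j' => if j' = j then c else 0, ?_⟩
  unfold dotv
  rw [Finset.sum_eq_single j]
  · simp [hj1]
  · intro b _ hb; simp [hb]
  · simp

lemma exists_third (hn : 3 ≤ n) (i k : Fin n) : ∃ r : Fin n, r ≠ i ∧ r ≠ k := by
  by_contra h
  push_neg at h
  have hsub : (Finset.univ : Finset (Fin n)) ⊆ {i, k} := by
    intro r _
    rcases Classical.em (r = i) with hr | hr
    · simp [hr]
    · simp [h r hr]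
  have := Finset.card_le_card hsub
  simp only [Finset.card_univ, Fintype.card_fin] at this
  have h2 : ({i, k} : Finset (Fin n)).card ≤ 2 := Finset.card_insert_le _ _ |>.trans (by simp)
  omega

lemma diff_two_rows {ξ ξ' : Fin n → F2 d} {i k : Fin n} (hik : i ≠ k)
    (hsame : ∀ j, j ≠ i → j ≠ k → ξ j = ξ' j) :
    incVec ξ - incVec ξ' =
      (uv i (ξ i) - uv i (ξ' i)) + (uv k (ξ k) - uv k (ξ' k)) := by
  funext j τ
  simp only [Pi.sub_apply, Pi.add_apply, incVec, uv]
  by_cases hj : j = i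
  · subst hj
    simp [hik, eq_comm]
  · by_cases hj' : j = k
    · subst hj'
      simp [hj, eq_comm]
    · rw [hsame j hj hj']
      simp [hj, hj']

lemma diff_three_rows {ξ ξ' : Fin n → F2 d} {i k r : Fin n} (hik : i ≠ k) (hir : i ≠ r)
    (hkr : k ≠ r)
    (hsame : ∀ j, j ≠ i → j ≠ k → j ≠ r → ξ j = ξ' j) :
    incVec ξ - incVec ξ' =
      (uv i (ξ i) - uv i (ξ' i)) + (uv k (ξ k) - uv k (ξ' k)) + (uv r (ξ r) - uv r (ξ' r)) := by
  funext j τ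
  simp only [Pi.sub_apply, Pi.add_apply, incVec, uv]
  by_cases hj : j = i
  · subst hj; simp [hik, hir, eq_comm]
  · by_cases hj' : j = k
    · subst hj'; simp [hj, hkr, eq_comm]
    · by_cases hj'' : j = r
      · subst hj''; simp [hj, hj', eq_comm]
      · rw [hsame j hj hj' hj'']
        simp [hj, hj', hj'']

lemma diff_mem_vectorSpan {η : F2 d} {I : Finset (Fin n)} {ξ ξ' : Fin n → F2 d}
    (hξ : ξ ∈ Tset η I) (hξ' : ξ' ∈ Tset η I) :
    incVec ξ - incVec ξ' ∈ vectorSpan ℝ (Vface η I) := by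
  have h1 : incVec ξ ∈ Vface η I := ⟨ξ, hξ, rfl⟩
  have h2 : incVec ξ' ∈ Vface η I := ⟨ξ', hξ', rfl⟩
  exact vsub_mem_vectorSpan ℝ h1 h2


lemma z2_eps (a b : ZMod 2) : (a + 1) + a + (b + (b + 1)) = 0 := by revert a b; decide

lemma Gstep (hn : 3 ≤ n) {η : F2 d} (hη : η ≠ 0) {I : Finset (Fin n)} (hI : Odd I.card)
    (i k : Fin n) (hik : i ≠ k) (ω τ δ : F2 d) (hδ : dotv η δ = 0)
    (hτ : dotv η τ = tI I k) :
    (uv i ω - uv i (ω + δ)) + (uv k τ - uv k (τ + δ)) ∈ vectorSpan ℝ (Vface η I) := by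
  obtain ⟨r, hri, hrk⟩ := exists_third hn i k
  have hir : i ≠ r := fun h => hri h.symm
  have hkr : k ≠ r := fun h => hrk h.symm
  choose rep hrep using fun c => exists_dotv hη c
  set p : Fin n := if dotv η ω = tI I i + 1 then i else r with hp
  set a : Fin n → ZMod 2 := fun j => if j = p then tI I j + 1 else tI I j with ha
  set v : Fin n → F2 d := fun j => if j = i then ω else if j = k then τ else rep (a j) with hv
  set v' : Fin n → F2 d :=
    fun j => if j = i then ω + δ else if j = k then τ + δ else rep (a j) with hv'
  have hkp : k ≠ p := by
    rw [hp]; split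
    · exact fun h => hik h.symm
    · exact hkr
  have hai : a i = dotv η ω := by
    simp only [ha, hp]
    by_cases hcase : dotv η ω = tI I i + 1
    · rw [if_pos hcase, if_pos rfl]; exact hcase.symm
    · rw [if_neg hcase, if_neg hir]; exact (z2_eq _ _ hcase).symm
  have hak : a k = tI I k := by simp only [ha]; rw [if_neg hkp]
  have hva : ∀ j, j ≠ r → dotv η (v j) = a j := by
    intro j _
    simp only [hv]
    by_cases hj : j = i
    · subst hj; rw [if_pos rfl, hai]
    · by_cases hj' : j = k
      · subst hj'; rw [if_neg hj, if_pos rfl, hτ, hak]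
      · rw [if_neg hj, if_neg hj']; exact hrep _
  have hva' : ∀ j, j ≠ r → dotv η (v' j) = a j := by
    intro j _
    simp only [hv']
    by_cases hj : j = i
    · subst hj; rw [if_pos rfl, dotv_add, hδ, add_zero, hai]
    · by_cases hj' : j = k
      · subst hj'; rw [if_neg hj, if_pos rfl, dotv_add, hδ, add_zero, hτ, hak]
      · rw [if_neg hj, if_neg hj']; exact hrep _
  have hξ : mk v r ∈ Tset η I := mk_tight η I hI v r p a (fun _ => rfl) hva
  have hξ' : mk v' r ∈ Tset η I := mk_tight η I hI v' r p a (fun _ => rfl) hva'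
  have hvv' : ∀ j, v' j = v j + ((if j = i then δ else 0) + (if j = k then δ else 0)) := by
    intro j
    simp only [hv, hv']
    by_cases hj : j = i
    · subst hj; rw [if_pos rfl, if_pos rfl, if_pos rfl, if_neg hik, add_zero]
    · by_cases hj' : j = k
      · subst hj'; simp [hj]
      · rw [if_neg hj, if_neg hj, if_neg hj', if_neg hj', if_neg hj, if_neg hj', add_zero,
          add_zero]
  have hrr : mk v r r = mk v' r r := by
    unfold mk
    rw [if_pos rfl, if_pos rfl]
    rw [Finset.sum_congr rfl fun j _ => hvv' j, Finset.sum_add_distrib,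
      Finset.sum_add_distrib,
      Finset.sum_ite_eq' (Finset.univ.erase r) i (fun _ => δ),
      Finset.sum_ite_eq' (Finset.univ.erase r) k (fun _ => δ),
      if_pos (Finset.mem_erase.mpr ⟨hir, Finset.mem_univ i⟩),
      if_pos (Finset.mem_erase.mpr ⟨hkr, Finset.mem_univ k⟩),
      F2_self, add_zero]
  have hsame : ∀ j, j ≠ i → j ≠ k → mk v r j = mk v' r j := by
    intro j hj hj'
    by_cases hjr : j = r
    · subst hjr; exact hrr
    · rw [mk_apply_ne v r hjr, mk_apply_ne v' r hjr, hvv' j, if_neg hj, if_neg hj', add_zero,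
        add_zero]
  have hdiff := diff_two_rows hik hsame
  have e1 : mk v r i = ω := by rw [mk_apply_ne v r hir]; simp [hv]
  have e2 : mk v' r i = ω + δ := by rw [mk_apply_ne v' r hir]; simp [hv']
  have e3 : mk v r k = τ := by rw [mk_apply_ne v r hkr]; simp [hv, hik.symm]
  have e4 : mk v' r k = τ + δ := by rw [mk_apply_ne v' r hkr]; simp [hv', hik.symm]
  rw [e1, e2, e3, e4] at hdiff
  rw [← hdiff]
  exact diff_mem_vectorSpan hξ hξ'


lemma Estep (hn : 3 ≤ n) {η : F2 d} (hη : η ≠ 0) {I : Finset (Fin n)} (hI : Odd I.card)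
    (i : Fin n) (ω δ : F2 d) (hδ : dotv η δ = 0) :
    uv i ω - uv i (ω + δ) ∈ vectorSpan ℝ (Vface η I) := by
  obtain ⟨k, hki, -⟩ := exists_third hn i i
  obtain ⟨m, hmi, hmk⟩ := exists_third hn i k
  obtain ⟨τ, hτ⟩ := exists_dotv hη (tI I k)
  obtain ⟨σ, hσ⟩ := exists_dotv hη (tI I m)
  have A := Gstep hn hη hI i k (Ne.symm hki) ω τ δ hδ hτ
  have B := Gstep hn hη hI i m (Ne.symm hmi) ω σ δ hδ hσ
  have C := Gstep hn hη hI k m (Ne.symm hmk) τ σ δ hδ hσ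
  set X := uv i ω - uv i (ω + δ) with hX
  have h2 : X + X ∈ vectorSpan ℝ (Vface η I) := by
    have h3 := sub_mem (add_mem A B) C
    have heq : X + X =
        ((X + (uv k τ - uv k (τ + δ))) + (X + (uv m σ - uv m (σ + δ)))) -
          ((uv k τ - uv k (τ + δ)) + (uv m σ - uv m (σ + δ))) := by abel
    rw [heq]; exact h3
  have hhalf : X = (2⁻¹ : ℝ) • (X + X) := by
    rw [← two_smul ℝ X, smul_smul]; norm_num
  rw [hhalf]
  exact Submodule.smul_mem _ _ h2

lemma Cstep (hn : 3 ≤ n) {η : F2 d} (hη : η ≠ 0) {I : Finset (Fin n)} (hI : Odd I.card)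
    (i k : Fin n) (hik : i ≠ k) (ωi1 ωi0 ωk1 ωk0 : F2 d)
    (hi1 : dotv η ωi1 = tI I i + 1) (hi0 : dotv η ωi0 = tI I i)
    (hk1 : dotv η ωk1 = tI I k + 1) (hk0 : dotv η ωk0 = tI I k) :
    (uv i ωi1 - uv i ωi0) - (uv k ωk1 - uv k ωk0) ∈ vectorSpan ℝ (Vface η I) := by
  obtain ⟨r, hri, hrk⟩ := exists_third hn i k
  have hir : i ≠ r := fun h => hri h.symm
  have hkr : k ≠ r := fun h => hrk h.symm
  choose rep hrep using fun c => exists_dotv hη c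
  set v : Fin n → F2 d :=
    fun j => if j = i then ωi1 else if j = k then ωk0 else rep (tI I j) with hv
  set v' : Fin n → F2 d :=
    fun j => if j = i then ωi0 else if j = k then ωk1 else rep (tI I j) with hv'
  set a : Fin n → ZMod 2 := fun j => if j = i then tI I j + 1 else tI I j with ha
  set a' : Fin n → ZMod 2 := fun j => if j = k then tI I j + 1 else tI I j with ha'
  have hva : ∀ j, j ≠ r → dotv η (v j) = a j := by
    intro j _
    simp only [hv, ha]
    by_cases hj : j = i
    · subst hj; rw [if_pos rfl, if_pos rfl, hi1]
    · by_cases hj' : j = k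
      · subst hj'; rw [if_neg hj, if_pos rfl, if_neg hj, hk0]
      · rw [if_neg hj, if_neg hj', if_neg hj]; exact hrep _
  have hva' : ∀ j, j ≠ r → dotv η (v' j) = a' j := by
    intro j _
    simp only [hv', ha']
    by_cases hj : j = i
    · subst hj; rw [if_pos rfl, if_neg hik, hi0]
    · by_cases hj' : j = k
      · subst hj'; rw [if_neg hj, if_pos rfl, if_pos rfl, hk1]
      · rw [if_neg hj, if_neg hj', if_neg hj']; exact hrep _
  have hξ : mk v r ∈ Tset η I := mk_tight η I hI v r i a (fun _ => rfl) hva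
  have hξ' : mk v' r ∈ Tset η I := mk_tight η I hI v' r k a' (fun _ => rfl) hva'
  set ε : F2 d := (ωi1 + ωi0) + (ωk0 + ωk1) with hε
  have hdε : dotv η ε = 0 := by
    rw [hε, dotv_add, dotv_add, dotv_add, hi1, hi0, hk0, hk1]
    exact z2_eps _ _
  have hvv' : ∀ j, v' j = v j + ((if j = i then ωi1 + ωi0 else 0) +
      (if j = k then ωk0 + ωk1 else 0)) := by
    intro j
    simp only [hv, hv']
    by_cases hj : j = i
    · subst hj
      rw [if_pos rfl, if_pos rfl, if_pos rfl, if_neg hik, add_zero, F2_add_add]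
    · by_cases hj' : j = k
      · subst hj'
        simp [hj, F2_add_add]
      · rw [if_neg hj, if_neg hj, if_neg hj', if_neg hj', if_neg hj, if_neg hj', add_zero,
          add_zero]
  have hrr : mk v' r r = mk v r r + ε := by
    unfold mk
    rw [if_pos rfl, if_pos rfl]
    rw [Finset.sum_congr rfl fun j _ => hvv' j, Finset.sum_add_distrib,
      Finset.sum_add_distrib,
      Finset.sum_ite_eq' (Finset.univ.erase r) i (fun _ => ωi1 + ωi0),
      Finset.sum_ite_eq' (Finset.univ.erase r) k (fun _ => ωk0 + ωk1),
      if_pos (Finset.mem_erase.mpr ⟨hir, Finset.mem_univ i⟩),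
      if_pos (Finset.mem_erase.mpr ⟨hkr, Finset.mem_univ k⟩)]
  have hsame : ∀ j, j ≠ i → j ≠ k → j ≠ r → mk v r j = mk v' r j := by
    intro j hj hj' hjr
    rw [mk_apply_ne v r hjr, mk_apply_ne v' r hjr, hvv' j, if_neg hj, if_neg hj', add_zero,
      add_zero]
  have hdiff := diff_three_rows hik hir hkr hsame
  have e1 : mk v r i = ωi1 := by rw [mk_apply_ne v r hir]; simp [hv]
  have e2 : mk v' r i = ωi0 := by rw [mk_apply_ne v' r hir]; simp [hv']
  have e3 : mk v r k = ωk0 := by rw [mk_apply_ne v r hkr]; simp [hv, hik.symm]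
  have e4 : mk v' r k = ωk1 := by rw [mk_apply_ne v' r hkr]; simp [hv', hik.symm]
  rw [e1, e2, e3, e4, hrr] at hdiff
  have hE := Estep hn hη hI r (mk v r r) ε hdε
  have key : (uv i ωi1 - uv i ωi0) - (uv k ωk1 - uv k ωk0) =
      (incVec (mk v r) - incVec (mk v' r)) -
        (uv r (mk v r r) - uv r (mk v r r + ε)) := by
    rw [hdiff]; abel
  rw [key]
  exact sub_mem (diff_mem_vectorSpan hξ hξ') hE


lemma pi_decomp (x : Fin n → F2 d → ℝ) : (∑ i, ∑ ω, x i ω • uv i ω) = x := by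
  funext j τ
  simp only [Finset.sum_apply, Pi.smul_apply, uv, smul_eq_mul, mul_ite, mul_one, mul_zero]
  rw [Finset.sum_eq_single j]
  · rw [Finset.sum_eq_single τ]
    · simp
    · intro ω _ hω
      simp [Ne.symm hω]
    · simp
  · intro i _ hij
    exact Finset.sum_eq_zero fun ω _ => by simp [Ne.symm hij]
  · simp

lemma sC_sum_eq_filter (η : F2 d) (I : Finset (Fin n)) (x : Fin n → F2 d → ℝ) (i : Fin n) :
    (∑ ω, sC η I i ω * x i ω) =
      ∑ ω ∈ Finset.univ.filter (fun ω : F2 d => dotv η ω = tI I i + 1), x i ω := by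
  rw [Finset.sum_filter]
  refine Finset.sum_congr rfl fun ω _ => ?_
  unfold sC
  split <;> simp

lemma K_le_span (hn : 3 ≤ n) {η : F2 d} (hη : η ≠ 0) {I : Finset (Fin n)} (hI : Odd I.card)
    (y : Fin n → F2 d → ℝ) (hy1 : ∀ i, (∑ ω, y i ω) = 0)
    (hy2 : (∑ i, ∑ ω, sC η I i ω * y i ω) = 0) :
    y ∈ vectorSpan ℝ (Vface η I) := by
  choose rep hrep using fun c => exists_dotv hη c
  set Av : Fin n → F2 d := fun i => rep (tI I i + 1) with hAv
  set Bv : Fin n → F2 d := fun i => rep (tI I i) with hBv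
  set w : Fin n → (Fin n → F2 d → ℝ) := fun i => uv i (Av i) - uv i (Bv i) with hw
  set flipF : Fin n → Finset (F2 d) :=
    fun i => Finset.univ.filter (fun ω : F2 d => dotv η ω = tI I i + 1) with hflipF
  set u : Fin n → ℝ := fun i => ∑ ω ∈ flipF i, y i ω with hu
  have hAmem : ∀ i, Av i ∈ flipF i := by
    intro i; simp [hflipF, hAv, hrep]
  have hBmem : ∀ i, Bv i ∉ flipF i := by
    intro i
    simp only [hflipF, hBv, Finset.mem_filter, Finset.mem_univ, true_and, hrep]
    exact fun h => z2_ne _ h.symm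
  have husum : (∑ i, u i) = 0 := by
    rw [← hy2]
    exact Finset.sum_congr rfl fun i _ => (sC_sum_eq_filter η I y i).symm
  set z : Fin n → F2 d → ℝ := y - ∑ i, u i • w i with hz
  -- row entries of the correction term
  have hswz : ∀ i ω, (∑ k, u k • w k) i ω =
      u i * ((if ω = Av i then (1:ℝ) else 0) - (if ω = Bv i then 1 else 0)) := by
    intro i ω
    rw [Finset.sum_apply, Finset.sum_apply]
    rw [Finset.sum_eq_single i]
    · simp [hw, uv]
    · intro k _ hki
      simp [hw, uv, Ne.symm hki]
    · simp
  have hzval : ∀ i ω, z i ω = y i ω -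
      u i * ((if ω = Av i then (1:ℝ) else 0) - (if ω = Bv i then 1 else 0)) := by
    intro i ω
    rw [hz]
    simp only [Pi.sub_apply]
    rw [hswz i ω]
  -- class sums of z vanish
  have hz1 : ∀ i, (∑ ω ∈ flipF i, z i ω) = 0 := by
    intro i
    rw [Finset.sum_congr rfl fun ω _ => hzval i ω, Finset.sum_sub_distrib, ← Finset.mul_sum,
      Finset.sum_sub_distrib,
      Finset.sum_ite_eq' (flipF i) (Av i) (fun _ => (1:ℝ)),
      Finset.sum_ite_eq' (flipF i) (Bv i) (fun _ => (1:ℝ)),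
      if_pos (hAmem i), if_neg (hBmem i)]
    simp [hu]
  have hz0 : ∀ i, (∑ ω ∈ Finset.univ.filter
      (fun ω : F2 d => ¬(dotv η ω = tI I i + 1)), z i ω) = 0 := by
    intro i
    have htot : (∑ ω ∈ flipF i, z i ω) + (∑ ω ∈ Finset.univ.filter
        (fun ω : F2 d => ¬(dotv η ω = tI I i + 1)), z i ω) = ∑ ω, z i ω :=
      Finset.sum_filter_add_sum_filter_not Finset.univ _ _
    have hztot : (∑ ω, z i ω) = 0 := by
      rw [Finset.sum_congr rfl fun ω _ => hzval i ω, Finset.sum_sub_distrib, hy1 i,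
        ← Finset.mul_sum, Finset.sum_sub_distrib,
        Finset.sum_ite_eq' Finset.univ (Av i) (fun _ => (1:ℝ)),
        Finset.sum_ite_eq' Finset.univ (Bv i) (fun _ => (1:ℝ)),
        if_pos (Finset.mem_univ _), if_pos (Finset.mem_univ _)]
      simp
    rw [hz1 i, zero_add] at htot
    rw [htot, hztot]
  -- z lies in the span
  have hzmem : z ∈ vectorSpan ℝ (Vface η I) := by
    have hkey : z = ∑ i, ∑ ω, z i ω • (uv i ω - uv i (rep (dotv η ω))) := by
      have hsplit : (∑ i, ∑ ω, z i ω • (uv i ω - uv i (rep (dotv η ω)))) =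
          (∑ i, ∑ ω, z i ω • uv i ω) - ∑ i, ∑ ω, z i ω • uv i (rep (dotv η ω)) := by
        rw [← Finset.sum_sub_distrib]
        refine Finset.sum_congr rfl fun i _ => ?_
        rw [← Finset.sum_sub_distrib]
        exact Finset.sum_congr rfl fun ω _ => smul_sub _ _ _
      have hzero : ∀ i, (∑ ω, z i ω • uv i (rep (dotv η ω))) = 0 := by
        intro i
        rw [← Finset.sum_filter_add_sum_filter_not Finset.univ
          (fun ω : F2 d => dotv η ω = tI I i + 1)]
        have h1 : (∑ ω ∈ flipF i, z i ω • uv i (rep (dotv η ω))) =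
            (∑ ω ∈ flipF i, z i ω) • uv i (Av i) := by
          rw [Finset.sum_smul]
          refine Finset.sum_congr rfl fun ω hω => ?_
          have : dotv η ω = tI I i + 1 := (Finset.mem_filter.mp hω).2
          rw [this]
        have h2 : (∑ ω ∈ Finset.univ.filter
            (fun ω : F2 d => ¬(dotv η ω = tI I i + 1)), z i ω • uv i (rep (dotv η ω))) =
            (∑ ω ∈ Finset.univ.filter
              (fun ω : F2 d => ¬(dotv η ω = tI I i + 1)), z i ω) • uv i (Bv i) := by
          rw [Finset.sum_smul]
          refine Finset.sum_congr rfl fun ω hω => ?_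
          have h3 : dotv η ω = tI I i := z2_eq _ _ (Finset.mem_filter.mp hω).2
          rw [h3]
        rw [h1, h2, hz1 i, hz0 i, zero_smul, zero_smul, add_zero]
      rw [hsplit, pi_decomp z, Finset.sum_congr rfl fun i _ => hzero i]
      simp
    rw [hkey]
    refine Submodule.sum_mem _ fun i _ => Submodule.sum_mem _ fun ω _ =>
      Submodule.smul_mem _ _ ?_
    have hδ : dotv η (ω + rep (dotv η ω)) = 0 := by
      rw [dotv_add, hrep, z2_self]
    have := Estep hn hη hI i ω (ω + rep (dotv η ω)) hδ
    rwa [F2_add_add] at this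
  -- the correction term lies in the span
  have hwmem : (∑ i, u i • w i) ∈ vectorSpan ℝ (Vface η I) := by
    set i0 : Fin n := ⟨0, by omega⟩ with hi0
    have hkey : (∑ i, u i • w i) = ∑ i, u i • (w i - w i0) := by
      have : (∑ i, u i • (w i - w i0)) = (∑ i, u i • w i) - ∑ i, u i • w i0 := by
        rw [← Finset.sum_sub_distrib]
        exact Finset.sum_congr rfl fun i _ => smul_sub _ _ _
      rw [this, ← Finset.sum_smul, husum, zero_smul, sub_zero]
    rw [hkey]
    refine Submodule.sum_mem _ fun i _ => Submodule.smul_mem _ _ ?_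
    by_cases hii : i = i0
    · subst hii; rw [sub_self]; exact Submodule.zero_mem _
    · have := Cstep hn hη hI i i0 hii (Av i) (Bv i) (Av i0) (Bv i0)
        (hrep _) (hrep _) (hrep _) (hrep _)
      exact this
  have : y = z + ∑ i, u i • w i := by rw [hz]; abel
  rw [this]
  exact Submodule.add_mem _ hzmem hwmem


noncomputable def Phi (η : F2 d) (I : Finset (Fin n)) :
    (Fin n → F2 d → ℝ) →ₗ[ℝ] (Fin n → ℝ) × ℝ :=
  (LinearMap.pi fun i => fL i).prod (gL η I)

lemma mem_ker_Phi (η : F2 d) (I : Finset (Fin n)) (x : Fin n → F2 d → ℝ) :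
    x ∈ LinearMap.ker (Phi η I) ↔
      (∀ i, (∑ ω, x i ω) = 0) ∧ (∑ i, ∑ ω, sC η I i ω * x i ω) = 0 := by
  rw [LinearMap.mem_ker]
  constructor
  · intro h
    refine ⟨fun i => ?_, ?_⟩
    · exact congrFun (congrArg Prod.fst h) i
    · exact congrArg Prod.snd h
  · rintro ⟨h1, h2⟩
    rw [Prod.ext_iff]
    exact ⟨funext fun i => h1 i, h2⟩

lemma span_le_ker (η : F2 d) (I : Finset (Fin n)) :
    vectorSpan ℝ (Vface η I) ≤ LinearMap.ker (Phi η I) := by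
  rw [vectorSpan_def]
  rw [Submodule.span_le]
  rintro v ⟨x1, hx1, x2, hx2, rfl⟩
  obtain ⟨ξ, hξ, rfl⟩ := hx1
  obtain ⟨ξ', hξ', rfl⟩ := hx2
  have hval : ∀ ζ : Fin n → F2 d, ζ ∈ Tset η I → Phi η I (incVec ζ) = (fun _ => 1, 1) := by
    intro ζ hζ
    have hg : gL η I (incVec ζ) = 1 := by
      rw [gL_incVec, hζ.2]; norm_num
    have hf : ∀ i, fL i (incVec ζ) = 1 := fun i => fL_incVec i ζ
    rw [Prod.ext_iff]
    exact ⟨funext fun i => hf i, hg⟩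
  show incVec ξ -ᵥ incVec ξ' ∈ LinearMap.ker (Phi η I)
  rw [LinearMap.mem_ker]
  have : (incVec ξ : Fin n → F2 d → ℝ) -ᵥ incVec ξ' = incVec ξ - incVec ξ' := rfl
  rw [this, map_sub, hval ξ hξ, hval ξ' hξ']
  simp

lemma Phi_surj (hn : 3 ≤ n) {η : F2 d} (hη : η ≠ 0) (I : Finset (Fin n)) :
    Function.Surjective (Phi η I) := by
  choose rep hrep using fun c => exists_dotv hη c
  set Av : Fin n → F2 d := fun i => rep (tI I i + 1) with hAv
  set Bv : Fin n → F2 d := fun i => rep (tI I i) with hBv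
  have hABne : ∀ i, Av i ≠ Bv i := by
    intro i h
    have h1 : dotv η (Av i) = tI I i + 1 := hrep _
    have h2 : dotv η (Bv i) = tI I i := hrep _
    rw [h, h2] at h1
    exact z2_ne _ h1.symm
  rintro ⟨a, b⟩
  set i0 : Fin n := ⟨0, by omega⟩ with hi0
  set c : Fin n → ℝ := fun i => if i = i0 then b else 0 with hc
  refine ⟨fun i ω => (if ω = Av i then c i else 0) + (if ω = Bv i then a i - c i else 0), ?_⟩
  have hsC_A : ∀ i, sC η I i (Av i) = 1 := by
    intro i; unfold sC; rw [if_pos (hrep _)]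
  have hsC_B : ∀ i, sC η I i (Bv i) = 0 := by
    intro i; unfold sC
    have h2 : dotv η (Bv i) = tI I i := hrep _
    exact if_neg (fun h => z2_ne _ ((h2.symm.trans h).symm))
  have hf : ∀ i, (∑ ω, ((if ω = Av i then c i else 0) + (if ω = Bv i then a i - c i else 0))) = a i := by
    intro i
    rw [Finset.sum_add_distrib,
      Finset.sum_ite_eq' Finset.univ (Av i) (fun _ => c i),
      Finset.sum_ite_eq' Finset.univ (Bv i) (fun _ => a i - c i),
      if_pos (Finset.mem_univ _), if_pos (Finset.mem_univ _)]
    ring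
  have hg : ∀ i, (∑ ω, sC η I i ω *
      ((if ω = Av i then c i else 0) + (if ω = Bv i then a i - c i else 0))) = c i := by
    intro i
    have : ∀ ω : F2 d, sC η I i ω *
        ((if ω = Av i then c i else 0) + (if ω = Bv i then a i - c i else 0)) =
        (if ω = Av i then sC η I i ω * c i else 0) +
          (if ω = Bv i then sC η I i ω * (a i - c i) else 0) := by
      intro ω
      rw [mul_add]
      congr 1 <;> (split <;> simp)
    rw [Finset.sum_congr rfl fun ω _ => this ω, Finset.sum_add_distrib,
      Finset.sum_ite_eq' Finset.univ (Av i) (fun ω => sC η I i ω * c i),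
      Finset.sum_ite_eq' Finset.univ (Bv i) (fun ω => sC η I i ω * (a i - c i)),
      if_pos (Finset.mem_univ _), if_pos (Finset.mem_univ _), hsC_A, hsC_B]
    ring
  rw [Prod.ext_iff]
  refine ⟨funext fun i => hf i, ?_⟩
  show (∑ i, ∑ ω, sC η I i ω *
      ((if ω = Av i then c i else 0) + (if ω = Bv i then a i - c i else 0))) = b
  rw [Finset.sum_congr rfl fun i _ => hg i]
  simp only [hc]
  rw [Finset.sum_ite_eq' Finset.univ i0 (fun _ => b), if_pos (Finset.mem_univ _)]

lemma finrank_ker_Phi (hn : 3 ≤ n) {η : F2 d} (hη : η ≠ 0) (I : Finset (Fin n)) :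
    Module.finrank ℝ (LinearMap.ker (Phi η I)) = n * 2 ^ d - (n + 1) := by
  have hr := LinearMap.finrank_range_add_finrank_ker (Phi η I)
  have hrange : LinearMap.range (Phi η I) = ⊤ :=
    LinearMap.range_eq_top.mpr (Phi_surj hn hη I)
  rw [hrange, finrank_top] at hr
  have hcod : Module.finrank ℝ ((Fin n → ℝ) × ℝ) = n + 1 := by
    rw [Module.finrank_prod, Module.finrank_pi, Module.finrank_self]
    simp
  have hdom : Module.finrank ℝ (Fin n → F2 d → ℝ) = n * 2 ^ d := by
    rw [Module.finrank_pi_fintype]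
    have : ∀ i : Fin n, Module.finrank ℝ (F2 d → ℝ) = 2 ^ d := by
      intro i
      rw [Module.finrank_pi]
      simp [Fintype.card_fun]
    rw [Finset.sum_congr rfl fun i _ => this i]
    simp [Finset.sum_const, mul_comm]
  rw [hcod, hdom] at hr
  omega


noncomputable def faceSet (η : F2 d) (I : Finset (Fin n)) : Set (Fin n → F2 d → ℝ) :=
  { x ∈ CTP (fun _ : Fin n => (Set.univ : Set (F2 d))) |
    losLHS (fun _ : Fin n => (Set.univ : Set (F2 d))) η I x = 1 }

lemma Vface_subset_face (η : F2 d) (I : Finset (Fin n)) : Vface η I ⊆ faceSet η I := by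
  rintro x ⟨ξ, hξ, rfl⟩
  constructor
  · exact subset_convexHull ℝ _ ⟨ξ, hξ.1, rfl⟩
  · rw [losLHS_eq_gL, gL_incVec, hξ.2]
    norm_num

lemma face_subset_hull {η : F2 d} {I : Finset (Fin n)} (hI : Odd I.card) :
    faceSet η I ⊆ convexHull ℝ (Vface η I) := by
  rintro x ⟨hx, hx1⟩
  rw [CTP, convexHull_eq] at hx
  obtain ⟨ι, t, wgt, zf, hw0, hw1, hz, hcm⟩ := hx
  have hgz : ∀ i ∈ t, (1:ℝ) ≤ gL η I (zf i) := by
    intro i hi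
    obtain ⟨ξ, hξcyc, hzi⟩ := hz i hi
    rw [← hzi, gL_incVec]
    have hodd : Odd (flipCount η I ξ) := flipCount_odd η I hI ξ hξcyc.2
    have : 1 ≤ flipCount η I ξ := hodd.pos
    exact_mod_cast this
  have hgx : gL η I x = 1 := by rw [← losLHS_eq_gL]; exact hx1
  have hxsum : x = ∑ i ∈ t, wgt i • zf i := by
    rw [← hcm, Finset.centerMass_eq_of_sum_1 _ _ hw1]
  have hsum0 : (∑ i ∈ t, wgt i * (gL η I (zf i) - 1)) = 0 := by
    have : (∑ i ∈ t, wgt i * (gL η I (zf i) - 1)) =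
        (∑ i ∈ t, wgt i * gL η I (zf i)) - ∑ i ∈ t, wgt i := by
      rw [← Finset.sum_sub_distrib]
      exact Finset.sum_congr rfl fun i _ => by ring
    rw [this, hw1]
    have : (∑ i ∈ t, wgt i * gL η I (zf i)) = gL η I x := by
      rw [hxsum, map_sum]
      exact (Finset.sum_congr rfl fun i _ => by rw [map_smul, smul_eq_mul]).symm
    rw [this, hgx, sub_self]
  have hterm : ∀ i ∈ t, wgt i * (gL η I (zf i) - 1) = 0 := by
    have hnn : ∀ i ∈ t, 0 ≤ wgt i * (gL η I (zf i) - 1) := fun i hi =>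
      mul_nonneg (hw0 i hi) (by linarith [hgz i hi])
    exact (Finset.sum_eq_zero_iff_of_nonneg hnn).mp hsum0
  have hmem : ∀ i ∈ t.filter (fun i => wgt i ≠ 0), zf i ∈ Vface η I := by
    intro i hi
    obtain ⟨hit, hwne⟩ := Finset.mem_filter.mp hi
    have h0 := hterm i hit
    have hg1 : gL η I (zf i) = 1 := by
      rcases mul_eq_zero.mp h0 with h | h
      · exact absurd h hwne
      · linarith
    obtain ⟨ξ, hξcyc, hzi⟩ := hz i hit
    refine ⟨ξ, ⟨hξcyc, ?_⟩, hzi⟩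
    rw [← hzi, gL_incVec] at hg1
    exact_mod_cast hg1
  have hx2 : x = (t.filter (fun i => wgt i ≠ 0)).centerMass wgt zf := by
    rw [← hcm]
    exact (Finset.centerMass_filter_ne_zero zf).symm
  rw [hx2]
  refine Finset.centerMass_mem_convexHull _ (fun i hi => hw0 i (Finset.mem_filter.mp hi).1) ?_ hmem
  rw [Finset.sum_filter_ne_zero, hw1]
  norm_num

lemma vectorSpan_face_eq (hn : 3 ≤ n) {η : F2 d} (hη : η ≠ 0) {I : Finset (Fin n)}
    (hI : Odd I.card) :
    vectorSpan ℝ (faceSet η I) = vectorSpan ℝ (Vface η I) := by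
  apply le_antisymm
  · have h1 : vectorSpan ℝ (faceSet η I) ≤ vectorSpan ℝ (convexHull ℝ (Vface η I)) :=
      vectorSpan_mono ℝ (face_subset_hull hI)
    have h2 : vectorSpan ℝ (convexHull ℝ (Vface η I)) = vectorSpan ℝ (Vface η I) := by
      rw [← direction_affineSpan, affineSpan_convexHull, direction_affineSpan]
    rwa [h2] at h1
  · exact vectorSpan_mono ℝ (Vface_subset_face η I)

end S9aux

/-- every lifted odd-set inequality defines a facet of the full CTP. -/
theorem statement9 (d n : ℕ) (hd : 1 ≤ d) (hn : 3 ≤ n) (η : F2 d) (hη : η ≠ 0)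
    (I : Finset (Fin n)) (hI : Odd I.card) :
    Module.finrank ℝ
        (affineSpan ℝ
          { x ∈ CTP (fun _ : Fin n => (Set.univ : Set (F2 d))) |
            losLHS (fun _ : Fin n => (Set.univ : Set (F2 d))) η I x = 1 }).direction
      = n * (2 ^ d - 1) - 1 := by
  classical
  show Module.finrank ℝ (affineSpan ℝ (S9aux.faceSet η I)).direction = n * (2 ^ d - 1) - 1
  rw [direction_affineSpan]
  have he : vectorSpan ℝ (S9aux.faceSet η I) = vectorSpan ℝ (S9aux.Vface η I) :=
    S9aux.vectorSpan_face_eq hn hη hI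
  have he2 : vectorSpan ℝ (S9aux.Vface η I) = LinearMap.ker (S9aux.Phi η I) := by
    apply le_antisymm (S9aux.span_le_ker η I)
    intro y hy
    obtain ⟨h1, h2⟩ := (S9aux.mem_ker_Phi η I y).mp hy
    exact S9aux.K_le_span hn hη hI y h1 h2
  rw [he, he2, S9aux.finrank_ker_Phi hn hη I]
  have hm : 2 ≤ 2 ^ d := by
    calc 2 = 2 ^ 1 := by norm_num
    _ ≤ 2 ^ d := Nat.pow_le_pow_right (by norm_num) hd
  set m := 2 ^ d with hmdef
  have hmul : n * (m - 1) + n * 1 = n * m := by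
    rw [← Nat.mul_add]
    congr 1
    omega
  omega
end

section
/- For every block configuration B in 𝔽₂^d, the cyclic transversal polytope CTP[B] equals the convex hull of the set of all 0/1-vectors in the transversal polytope TP[B] that satisfy all lifted odd-set inequalities associated with the standard basis vectors e_1, …, e_d of 𝔽₂^d (i.e., all LOS inequalities with η ∈ {e_1, …, e_d} and I ⊆ [n] of odd cardinality). -/
open scoped Classical

/-! A 0/1-point of `TP[B]` is the incidence vector of a transversal `ξ`. For such a point, the
left-hand side of the LOS inequality for `e_j` and `I` counts the indices on which `I` differs from
`S_j = {i | ξ(i)_j = 1}`, so it fails only for `I = S_j`. Hence all of these inequalities hold iff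
every `|S_j|` is even, i.e. iff `ξ` is cyclic: the two generating sets coincide. -/

open Finset

lemma exists_eq_ite_of_sum_eq_one {α : Type*} [Fintype α] [DecidableEq α] {v : α → ℝ}
    (h01 : ∀ a, v a = 0 ∨ v a = 1) (hsum : ∑ a, v a = 1) :
    ∃ a, ∀ b, v b = if a = b then 1 else 0 := by
  have hcard : (#{b | v b = 1} : ℝ) = ∑ b, v b := by
    rw [← sum_boole]
    exact sum_congr rfl fun b _ => by rcases h01 b with h | h <;> simp [h]
  obtain ⟨a, ha⟩ := card_eq_one.mp (by exact_mod_cast hcard.trans hsum)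
  refine ⟨a, fun b => ?_⟩
  have hb : v b = 1 ↔ b = a := by simpa using congrArg (b ∈ ·) ha
  split_ifs with hab
  · exact hb.mpr hab.symm
  · exact (h01 b).resolve_right fun h => hab (hb.mp h).symm

lemma sum_eq_card_filter_eq_one {ι : Type*} [Fintype ι] (f : ι → ZMod 2) :
    ∑ i, f i = #{i | f i = 1} := by
  rw [← sum_boole]
  refine sum_congr rfl fun i _ => ?_
  generalize f i = a
  revert a
  decide

variable {d n : ℕ} {B : Fin n → Set (F2 d)}

lemma sum_incVec (ξ : Fin n → F2 d) (i : Fin n) (s : Finset (F2 d)) :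
    ∑ ω ∈ s, incVec ξ i ω = if ξ i ∈ s then 1 else 0 := by
  simp [incVec]

lemma incVec_eq_zero_or_one (ξ : Fin n → F2 d) (i : Fin n) (ω : F2 d) :
    incVec ξ i ω = 0 ∨ incVec ξ i ω = 1 := by
  unfold incVec; split_ifs <;> simp

lemma incVec_mem_TP {ξ : Fin n → F2 d} (hξ : ∀ i, ξ i ∈ B i) : incVec ξ ∈ TP B := by
  refine ⟨fun i ω => ?_, fun i ω hω => if_neg fun (h : ξ i = ω) => hω (h ▸ hξ i), fun i => ?_⟩
  · rcases incVec_eq_zero_or_one ξ i ω with h | h <;> simp [h]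
  · simp [sum_incVec]

lemma exists_incVec_eq_of_mem_TP {x : Fin n → F2 d → ℝ} (hx : x ∈ TP B)
    (h01 : ∀ i ω, x i ω = 0 ∨ x i ω = 1) : ∃ ξ, (∀ i, ξ i ∈ B i) ∧ incVec ξ = x := by
  choose ξ hξ using fun i => exists_eq_ite_of_sum_eq_one (h01 i) (hx.2.2 i)
  refine ⟨ξ, fun i => ?_, funext fun i => funext fun ω => (hξ i ω).symm⟩
  by_contra hi
  simpa [hξ] using hx.2.1 i (ξ i) hi

lemma losLHS_single_incVec {ξ : Fin n → F2 d} (hξ : ∀ i, ξ i ∈ B i) (j : Fin d)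
    (I : Finset (Fin n)) :
    losLHS B (Pi.single j 1) I (incVec ξ) =
      #(I \ ({i | ξ i j = 1} : Finset (Fin n))) + #(({i | ξ i j = 1} : Finset (Fin n)) \ I) := by
  have hdot (ω : F2 d) : ∑ k, (Pi.single j 1 : F2 d) k * ω k = ω j := by
    simp [Pi.single_apply]
  have hbit (a : ZMod 2) : a = 0 ↔ ¬a = 1 := by revert a; decide
  simp only [losLHS, sum_incVec, mem_filter, mem_univ, hξ, hdot, true_and, sum_boole]
  congr 3 <;> ext i <;> simp [hbit, and_comm]

lemma one_le_losLHS_single_incVec_iff {ξ : Fin n → F2 d} (hξ : ∀ i, ξ i ∈ B i) (j : Fin d)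
    (I : Finset (Fin n)) :
    1 ≤ losLHS B (Pi.single j 1) I (incVec ξ) ↔ I ≠ ({i | ξ i j = 1} : Finset (Fin n)) := by
  rw [losLHS_single_incVec hξ, ← Nat.cast_add, Nat.one_le_cast, Nat.one_le_iff_ne_zero,
    Ne, Nat.add_eq_zero_iff, card_eq_zero, card_eq_zero, sdiff_eq_empty_iff_subset,
    sdiff_eq_empty_iff_subset, ← subset_antisymm_iff]

lemma forall_one_le_losLHS_single_incVec_iff {ξ : Fin n → F2 d} (hξ : ∀ i, ξ i ∈ B i) :
    (∀ (j : Fin d) (I : Finset (Fin n)), Odd #I → 1 ≤ losLHS B (Pi.single j 1) I (incVec ξ)) ↔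
      ∑ i, ξ i = 0 := by
  simp_rw [one_le_losLHS_single_incVec_iff hξ, funext_iff, Finset.sum_apply, Pi.zero_apply,
    sum_eq_card_filter_eq_one, ZMod.natCast_eq_zero_iff_even, ← Nat.not_odd_iff_even]
  exact forall_congr' fun j => ⟨fun h hS => h _ hS rfl, fun h I hI hIS => h (hIS ▸ hI)⟩

lemma incVec_image_cyclicTransversal :
    incVec '' { ξ | IsCyclicTransversal B ξ } =
      { x : Fin n → F2 d → ℝ | x ∈ TP B ∧ (∀ i ω, x i ω = 0 ∨ x i ω = 1) ∧
        ∀ (j : Fin d) (I : Finset (Fin n)), Odd I.card → 1 ≤ losLHS B (Pi.single j 1) I x } := by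
  ext x
  constructor
  · rintro ⟨ξ, ⟨hξ, hsum⟩, rfl⟩
    exact ⟨incVec_mem_TP hξ, incVec_eq_zero_or_one ξ,
      (forall_one_le_losLHS_single_incVec_iff hξ).mpr hsum⟩
  · rintro ⟨hx, h01, hlos⟩
    obtain ⟨ξ, hξ, rfl⟩ := exists_incVec_eq_of_mem_TP hx h01
    exact ⟨ξ, ⟨hξ, (forall_one_le_losLHS_single_incVec_iff hξ).mp hlos⟩, rfl⟩

theorem statement10_general (d n : ℕ) (B : Fin n → Set (F2 d)) :
    CTP B = convexHull ℝ { x : Fin n → F2 d → ℝ | x ∈ TP B ∧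
      (∀ i ω, x i ω = 0 ∨ x i ω = 1) ∧
      ∀ (j : Fin d) (I : Finset (Fin n)), Odd I.card →
        1 ≤ losLHS B (Pi.single j 1) I x } := by
  rw [CTP, incVec_image_cyclicTransversal]

/-- `CTP[B]` is the convex hull of the 0/1-points of `TP[B]` satisfying the
LOS inequalities associated with the standard basis vectors `e₁, …, e_d` of `𝔽₂^d`. -/
theorem statement10 (d n : ℕ) (hn : 2 ≤ n) (B : Fin n → Set (F2 d))
    (hB : ∀ i, (B i).Nonempty) :
    CTP B = convexHull ℝ { x : Fin n → F2 d → ℝ | x ∈ TP B ∧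
      (∀ i ω, x i ω = 0 ∨ x i ω = 1) ∧
      ∀ (j : Fin d) (I : Finset (Fin n)), Odd I.card →
        1 ≤ losLHS B (Pi.single j 1) I x } :=
  statement10_general d n B
end

section
/- Let B be a block configuration of length n in 𝔽₂^d and φ : 𝔽₂^d → 𝔽₂^{d̄} a linear map. Given an inequality Σ_{i=1}^n Σ_{ω̄ ∈ φ(B(i))} ā^i_{ω̄} x̄^i_{ω̄} ≥ β valid for CTP[φ(B)], its φ-lifting is the inequality Σ_{i=1}^n Σ_{ω ∈ B(i)} ā^i_{φ(ω)} x^i_ω ≥ β in ℝ^B. Then the φ-lifting of any LOS inequality for CTP[φ(B)] (associated with some nonzero η̄ ∈ 𝔽₂^{d̄} and odd I ⊆ [n]) is either itself a LOS inequality for CTP[B] (i.e., it coincides with the LOS inequality associated with some nonzero η ∈ 𝔽₂^d and the same I), or it is satisfied by every point of the transversal polytope TP[B]. -/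
open scoped Classical

/-- The left-hand side of the `φ`-lifting of the LOS inequality for `CTP[φ(B)]` associated
with `η'` and `I`: the coefficient of `x^i_ω` (for `ω ∈ B(i)`) is the LOS coefficient of
`x̄^i_{φ(ω)}`. -/
noncomputable def liftLOS {d d' n : ℕ} (B : Fin n → Set (F2 d)) (φ : F2 d →ₗ[ZMod 2] F2 d')
    (η' : F2 d') (I : Finset (Fin n)) (x : Fin n → F2 d → ℝ) : ℝ :=
  (∑ i ∈ I, ∑ ω ∈ Finset.univ.filter
      (fun ω : F2 d => ω ∈ B i ∧ (∑ j, η' j * φ ω j) = 0), x i ω) +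
  (∑ i ∈ Iᶜ, ∑ ω ∈ Finset.univ.filter
      (fun ω : F2 d => ω ∈ B i ∧ (∑ j, η' j * φ ω j) = 1), x i ω)

/-! Writing `φ` as a matrix `M`, the LOS coefficient of `x^i_ω` in the lifting depends only on
`η̄ ⬝ φ(ω) = (η̄ᵀ M) ⬝ ω`, so the lifting is the LOS inequality of `η = η̄ᵀ M` whenever this vector
is nonzero. If it vanishes, the lifted left-hand side is `∑_{i ∈ I} ∑_{ω ∈ B(i)} x^i_ω = |I| ≥ 1`
on `TP[B]`. -/

open Matrix

theorem dotProduct_linearMap_eq_vecMul_toMatrix' {K m n : Type*} [CommRing K] [Fintype m]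
    [Fintype n] [DecidableEq m] (φ : (m → K) →ₗ[K] n → K) (η : n → K) (v : m → K) :
    η ⬝ᵥ φ v = (η ᵥ* LinearMap.toMatrix' φ) ⬝ᵥ v := by
  rw [← dotProduct_mulVec, LinearMap.toMatrix'_mulVec]

theorem liftLOS_eq_losLHS {d d' n : ℕ} (B : Fin n → Set (F2 d)) (φ : F2 d →ₗ[ZMod 2] F2 d')
    (η' : F2 d') (I : Finset (Fin n)) (x : Fin n → F2 d → ℝ) :
    liftLOS B φ η' I x = losLHS B (η' ᵥ* LinearMap.toMatrix' φ) I x := by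
  have hcoef (ω : F2 d) : ∑ j, η' j * φ ω j = ∑ j, (η' ᵥ* LinearMap.toMatrix' φ) j * ω j :=
    dotProduct_linearMap_eq_vecMul_toMatrix' φ η' ω
  simp only [liftLOS, losLHS, hcoef]

theorem sum_block_eq_one_of_mem_TP {d n : ℕ} {B : Fin n → Set (F2 d)} {x : Fin n → F2 d → ℝ}
    (hx : x ∈ TP B) (i : Fin n) : ∑ ω ∈ Finset.univ.filter (· ∈ B i), x i ω = 1 := by
  obtain ⟨-, hsupp, hsum⟩ := hx
  rw [Finset.sum_filter_of_ne fun ω _ hω => by_contra fun hω' => hω (hsupp i ω hω'), hsum i]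

theorem losLHS_zero_of_mem_TP {d n : ℕ} {B : Fin n → Set (F2 d)} {x : Fin n → F2 d → ℝ}
    (hx : x ∈ TP B) (I : Finset (Fin n)) : losLHS B 0 I x = I.card := by
  simp only [losLHS, Pi.zero_apply, zero_mul, Finset.sum_const_zero, zero_ne_one, and_true,
    and_false, Finset.filter_false, Finset.sum_empty, add_zero, sum_block_eq_one_of_mem_TP hx,
    Finset.card_eq_sum_ones, Nat.cast_sum, Nat.cast_one]

theorem statement11_general (d d' n : ℕ) (B : Fin n → Set (F2 d)) (φ : F2 d →ₗ[ZMod 2] F2 d')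
    (η' : F2 d') (I : Finset (Fin n)) (hI : Odd I.card) :
    (∃ η : F2 d, η ≠ 0 ∧ ∀ x : Fin n → F2 d → ℝ, liftLOS B φ η' I x = losLHS B η I x) ∨
    (∀ x ∈ TP B, 1 ≤ liftLOS B φ η' I x) := by
  simp only [liftLOS_eq_losLHS]
  by_cases hη : η' ᵥ* LinearMap.toMatrix' φ = 0
  · refine Or.inr fun x hx => ?_
    rw [hη, losLHS_zero_of_mem_TP hx]
    exact_mod_cast hI.pos
  · exact Or.inl ⟨_, hη, fun _ => rfl⟩

/-- the `φ`-lifting of a LOS inequality for `CTP[φ(B)]` is either a LOS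
inequality for `CTP[B]` or valid on all of `TP[B]`. -/
theorem statement11 (d d' n : ℕ) (hn : 2 ≤ n) (B : Fin n → Set (F2 d))
    (hB : ∀ i, (B i).Nonempty) (φ : F2 d →ₗ[ZMod 2] F2 d')
    (η' : F2 d') (hη' : η' ≠ 0) (I : Finset (Fin n)) (hI : Odd I.card) :
    (∃ η : F2 d, η ≠ 0 ∧ ∀ x : Fin n → F2 d → ℝ, liftLOS B φ η' I x = losLHS B η I x) ∨
    (∀ x ∈ TP B, 1 ≤ liftLOS B φ η' I x) :=
  statement11_general d d' n B φ η' I hI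
end

section
/- For every block configuration B in 𝔽₂^d with rank(B) = 1, the cyclic transversal polytope is exactly the subset of the transversal polytope cut out by the lifted odd-set inequalities: CTP[B] = { x ∈ TP[B] : x satisfies the LOS inequality associated with η and I for every nonzero η ∈ 𝔽₂^d and every I ⊆ [n] of odd cardinality }. -/
open scoped Classical


namespace S12


variable {n : ℕ}


noncomputable def oddF (I : Finset (Fin n)) (t : Fin n → ℝ) : ℝ :=
  ∑ k, if k ∈ I then (1 - t k) else t k

def Pset (S₀ S₁ : Set (Fin n)) : Set (Fin n → ℝ) :=
  {t | (∀ i, 0 ≤ t i ∧ t i ≤ 1) ∧ (∀ i ∈ S₀, t i = 0) ∧ (∀ i ∈ S₁, t i = 1) ∧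
    ∀ I : Finset (Fin n), Odd I.card → 1 ≤ oddF I t}

def Vset (S₀ S₁ : Set (Fin n)) : Set (Fin n → ℝ) :=
  {t | t ∈ Pset S₀ S₁ ∧ ∀ i, t i = 0 ∨ t i = 1}

lemma oddF_eq_sum (I : Finset (Fin n)) (t : Fin n → ℝ) :
    oddF I t = (∑ i ∈ I, (1 - t i)) + ∑ i ∈ Iᶜ, t i := by
  rw [oddF, Finset.sum_ite]
  congr 1
  · apply Finset.sum_congr _ (fun _ _ => rfl); ext k; simp
  · apply Finset.sum_congr _ (fun _ _ => rfl); ext k; simp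

lemma oddF_affine (I : Finset (Fin n)) (a b : ℝ) (hab : a + b = 1) (x y : Fin n → ℝ) :
    oddF I (a • x + b • y) = a * oddF I x + b * oddF I y := by
  unfold oddF
  rw [Finset.mul_sum, Finset.mul_sum, ← Finset.sum_add_distrib]
  apply Finset.sum_congr rfl
  intro k _
  simp only [Pi.add_apply, Pi.smul_apply, smul_eq_mul]
  split_ifs <;> nlinarith

lemma convex_Pset (S₀ S₁ : Set (Fin n)) : Convex ℝ (Pset S₀ S₁) := by
  intro x hx y hy a b ha hb hab
  obtain ⟨hx1, hx2, hx3, hx4⟩ := hx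
  obtain ⟨hy1, hy2, hy3, hy4⟩ := hy
  refine ⟨fun i => ?_, fun i hi => ?_, fun i hi => ?_, fun I hI => ?_⟩
  · have := hx1 i; have := hy1 i
    simp only [Pi.add_apply, Pi.smul_apply, smul_eq_mul]
    constructor <;> nlinarith
  · simp only [Pi.add_apply, Pi.smul_apply, smul_eq_mul, hx2 i hi, hy2 i hi]; ring
  · simp only [Pi.add_apply, Pi.smul_apply, smul_eq_mul, hx3 i hi, hy3 i hi]; linarith
  · rw [oddF_affine I a b hab]
    have := hx4 I hI; have := hy4 I hI
    nlinarith

/-- For a 0/1 vector with support `A`, `oddF I t` equals the size of `I Δ A`. -/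
lemma oddF_integral (I A : Finset (Fin n)) (t : Fin n → ℝ)
    (ht : ∀ k, (k ∈ A ∧ t k = 1) ∨ (k ∉ A ∧ t k = 0)) :
    oddF I t = ((I \ A) ∪ (A \ I)).card := by
  rw [oddF]
  rw [Finset.card_eq_sum_ones, Nat.cast_sum]
  rw [← Finset.sum_filter_add_sum_filter_not Finset.univ (· ∈ (I \ A) ∪ (A \ I))]
  have h1 : ∀ k ∈ Finset.univ.filter (· ∈ (I \ A) ∪ (A \ I)),
      (if k ∈ I then (1 - t k) else t k) = 1 := by
    intro k hk
    simp only [Finset.mem_filter, Finset.mem_union, Finset.mem_sdiff] at hk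
    rcases ht k with ⟨h, h'⟩ | ⟨h, h'⟩ <;> rcases hk.2 with ⟨h1, h2⟩ | ⟨h1, h2⟩ <;>
      simp_all
  have h2 : ∀ k ∈ Finset.univ.filter (¬ · ∈ (I \ A) ∪ (A \ I)),
      (if k ∈ I then (1 - t k) else t k) = 0 := by
    intro k hk
    simp only [Finset.mem_filter, Finset.mem_union, Finset.mem_sdiff, not_or, not_and,
      not_not] at hk
    rcases ht k with ⟨h, h'⟩ | ⟨h, h'⟩ <;>
      · by_cases hI : k ∈ I <;> simp_all [hk.2.1, hk.2.2]
  rw [Finset.sum_congr rfl h1, Finset.sum_congr rfl h2]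
  have : Finset.univ.filter (· ∈ (I \ A) ∪ (A \ I)) = (I \ A) ∪ (A \ I) := by
    ext k; simp
  rw [this]
  simp

lemma card_sdiff_union_pos (I A : Finset (Fin n)) (hI : Odd I.card) (hA : Even A.card) :
    1 ≤ ((I \ A) ∪ (A \ I)).card := by
  rcases Finset.eq_empty_or_nonempty ((I \ A) ∪ (A \ I)) with h | h
  · exfalso
    have : I = A := by
      ext k
      have := Finset.eq_empty_iff_forall_notMem.1 h k
      simp only [Finset.mem_union, Finset.mem_sdiff, not_or, not_and, not_not] at this
      exact ⟨fun hk => this.1 hk, fun hk => this.2 hk⟩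
    rw [this] at hI
    exact (Nat.not_even_iff_odd.2 hI) hA
  · exact Nat.one_le_iff_ne_zero.2 (Finset.card_ne_zero_of_mem h.choose_spec)

lemma even_card_sdiff_union (I A : Finset (Fin n)) (hI : Odd I.card) (hA : Odd A.card) :
    Even ((I \ A) ∪ (A \ I)).card := by
  have hd : Disjoint (I \ A) (A \ I) := by
    rw [Finset.disjoint_left]; intro k h1 h2; simp at h1 h2; exact h2.2 h1.1
  rw [Finset.card_union_of_disjoint hd]
  have e1 : (I \ A).card + (I ∩ A).card = I.card := Finset.card_sdiff_add_card_inter I A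
  have e2 : (A \ I).card + (A ∩ I).card = A.card := Finset.card_sdiff_add_card_inter A I
  have e3 : (I ∩ A).card = (A ∩ I).card := by rw [Finset.inter_comm]
  rw [Nat.odd_iff] at hI hA
  rw [Nat.even_iff]
  omega

/-- Two tight odd-set constraints cannot have opposite patterns at two fractional coords. -/
lemma tight_pattern {S₀ S₁ : Set (Fin n)} {t : Fin n → ℝ} (htP : t ∈ Pset S₀ S₁)
    {i j : Fin n} (hij : i ≠ j) (hi : 0 < t i ∧ t i < 1) (hj : 0 < t j ∧ t j < 1)
    {I J : Finset (Fin n)} (hIo : Odd I.card) (hJo : Odd J.card)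
    (hIt : oddF I t = 1) (hJt : oddF J t = 1)
    (hIs : i ∈ I ↔ j ∈ I) (hJs : ¬(i ∈ J ↔ j ∈ J)) : False := by
  obtain ⟨hb, -, -, -⟩ := htP
  set g : Finset (Fin n) → Fin n → ℝ := fun K k => if k ∈ K then 1 - t k else t k with hg
  set D : Finset (Fin n) := (I \ J) ∪ (J \ I) with hD
  have hDmem : ∀ k, k ∈ D ↔ ¬(k ∈ I ↔ k ∈ J) := by
    intro k; simp only [hD, Finset.mem_union, Finset.mem_sdiff]; tauto
  -- exactly one of i, j lies in D; let m be the other one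
  have hone : (i ∈ D ∧ j ∉ D) ∨ (i ∉ D ∧ j ∈ D) := by
    rw [hDmem i, hDmem j]; tauto
  obtain ⟨m, m', hmD, hm'D, hmm'⟩ : ∃ m m', m ∉ D ∧ m' ∈ D ∧ (m = i ∨ m = j) := by
    rcases hone with ⟨h1, h2⟩ | ⟨h1, h2⟩
    · exact ⟨j, i, h2, h1, Or.inr rfl⟩
    · exact ⟨i, j, h1, h2, Or.inl rfl⟩
  have hmfrac : 0 < t m ∧ t m < 1 := by rcases hmm' with rfl | rfl <;> assumption
  have hsum2 : ∑ k, (g I k + g J k) = 2 := by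
    rw [Finset.sum_add_distrib]
    have : ∑ k, g I k = oddF I t := rfl
    have : ∑ k, g J k = oddF J t := rfl
    simp only [hg]
    rw [show (∑ k, if k ∈ I then 1 - t k else t k) = oddF I t from rfl,
      show (∑ k, if k ∈ J then 1 - t k else t k) = oddF J t from rfl, hIt, hJt]
    norm_num
  have hpos : ∀ k, 0 ≤ g I k + g J k := by
    intro k
    have := hb k
    simp only [hg]
    split_ifs <;> linarith [this.1, this.2]
  have hD1 : ∀ k ∈ D, (1:ℝ) ≤ g I k + g J k := by
    intro k hk
    rw [hDmem k] at hk
    have := hb k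
    simp only [hg]
    by_cases h1 : k ∈ I <;> by_cases h2 : k ∈ J <;> simp only [h1, h2, if_pos, if_neg, iff_true, iff_false, not_true, not_false_iff, if_true, if_false] at hk ⊢ <;> first | linarith | exact absurd trivial hk | simp_all
  have hmpos : 0 < g I m + g J m := by
    have hsame : m ∈ I ↔ m ∈ J := by
      by_contra h; exact hmD ((hDmem m).2 h)
    simp only [hg]
    by_cases h1 : m ∈ I
    · rw [if_pos h1, if_pos (hsame.1 h1)]; linarith [hmfrac.2]
    · rw [if_neg h1, if_neg (fun h => h1 (hsame.2 h))]; linarith [hmfrac.1]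
  have hDcard : 2 ≤ D.card := by
    have hev : Even D.card := even_card_sdiff_union I J hIo hJo
    have hne : D.Nonempty := ⟨m', hm'D⟩
    have := Finset.card_pos.2 hne
    rcases hev with ⟨c, hc⟩
    omega
  have hDsum : (D.card : ℝ) ≤ ∑ k ∈ D, (g I k + g J k) := by
    calc (D.card : ℝ) = ∑ _k ∈ D, (1:ℝ) := by simp
    _ ≤ _ := Finset.sum_le_sum hD1
  have hsub : ∑ k ∈ insert m D, (g I k + g J k) ≤ ∑ k, (g I k + g J k) :=
    Finset.sum_le_sum_of_subset_of_nonneg (Finset.subset_univ _)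
      (fun k _ _ => hpos k)
  rw [Finset.sum_insert hmD] at hsub
  have : (2:ℝ) ≤ (D.card : ℝ) := by exact_mod_cast hDcard
  linarith [hsum2 ▸ hsub]

lemma oddF_perturb (I : Finset (Fin n)) (t : Fin n → ℝ) (s σ : ℝ) {i j : Fin n} (hij : i ≠ j) :
    oddF I (t + s • (fun k => if k = i then 1 else if k = j then σ else 0)) =
      oddF I t + s * ((if i ∈ I then (-1:ℝ) else 1) + σ * (if j ∈ I then (-1:ℝ) else 1)) := by
  set d : Fin n → ℝ := fun k => if k = i then 1 else if k = j then σ else 0 with hd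
  have step : ∀ k, (if k ∈ I then 1 - (t + s • d) k else (t + s • d) k) =
      (if k ∈ I then 1 - t k else t k) + s * (d k * (if k ∈ I then (-1:ℝ) else 1)) := by
    intro k
    simp only [Pi.add_apply, Pi.smul_apply, smul_eq_mul]
    split_ifs <;> ring
  rw [oddF, Finset.sum_congr rfl (fun k _ => step k), Finset.sum_add_distrib, ← Finset.mul_sum]
  rw [show oddF I t = ∑ k, if k ∈ I then 1 - t k else t k from rfl]
  congr 2
  rw [← Finset.sum_subset (Finset.subset_univ ({i, j} : Finset (Fin n)))
    (fun k _ hk => by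
      simp only [Finset.mem_insert, Finset.mem_singleton, not_or] at hk
      simp [hd, hk.1, hk.2])]
  rw [Finset.sum_pair hij]
  simp [hd, hij.symm]

lemma perturb_mem (S₀ S₁ : Set (Fin n)) (t : Fin n → ℝ) (htP : t ∈ Pset S₀ S₁)
    {i j : Fin n} (hij : i ≠ j) (hi : 0 < t i ∧ t i < 1) (hj : 0 < t j ∧ t j < 1)
    (σ : ℝ) (hσ1 : σ = 1 ∨ σ = -1)
    (hσpat : ∀ I : Finset (Fin n), Odd I.card → oddF I t = 1 →
      ((if i ∈ I then (-1:ℝ) else 1) + σ * (if j ∈ I then (-1:ℝ) else 1)) = 0) :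
    t ∉ Set.extremePoints ℝ (Pset S₀ S₁) := by
  intro hext
  set d : Fin n → ℝ := fun k => if k = i then 1 else if k = j then σ else 0 with hd
  set T : Finset (Finset (Fin n)) :=
    Finset.univ.filter (fun I => Odd I.card ∧ 1 < oddF I t) with hT
  set E : Finset ℝ := insert (t i) (insert (1 - t i) (insert (t j) (insert (1 - t j)
    (T.image (fun I => (oddF I t - 1) / 2))))) with hE
  have hEne : E.Nonempty := ⟨t i, by simp [hE]⟩
  set ε := E.min' hEne with hε
  have hεle : ∀ x ∈ E, ε ≤ x := fun x hx => Finset.min'_le E x hx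
  have hεpos : 0 < ε := by
    rw [hε, Finset.lt_min'_iff]
    intro x hx
    simp only [hE, Finset.mem_insert, Finset.mem_image] at hx
    rcases hx with rfl | rfl | rfl | rfl | ⟨I, hIT, rfl⟩
    · exact hi.1
    · linarith [hi.2]
    · exact hj.1
    · linarith [hj.2]
    · simp only [hT, Finset.mem_filter] at hIT
      linarith [hIT.2.2]
  have key : ∀ s : ℝ, |s| ≤ ε → t + s • d ∈ Pset S₀ S₁ := by
    intro s hs
    have hs1 : -ε ≤ s := neg_le_of_abs_le hs
    have hs2 : s ≤ ε := le_of_abs_le hs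
    obtain ⟨hb, h0, h1, hineq⟩ := htP
    refine ⟨fun k => ?_, fun k hk => ?_, fun k hk => ?_, fun I hIo => ?_⟩
    · simp only [Pi.add_apply, Pi.smul_apply, smul_eq_mul]
      rcases eq_or_ne k i with rfl | hki
      · have e1 : ε ≤ t k := hεle _ (by simp [hE])
        have e2 : ε ≤ 1 - t k := hεle _ (by simp [hE])
        have hdk : d k = 1 := by simp [hd]
        rw [hdk, mul_one]
        constructor <;> linarith
      · rcases eq_or_ne k j with rfl | hkj
        · have e1 : ε ≤ t k := hεle _ (by simp [hE])
          have e2 : ε ≤ 1 - t k := hεle _ (by simp [hE])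
          have hdk : d k = σ := by simp [hd, hki]
          rw [hdk]
          rcases hσ1 with h | h <;> rw [h] <;> constructor <;> nlinarith
        · have hdk : d k = 0 := by simp [hd, hki, hkj]
          rw [hdk, mul_zero, add_zero]
          exact hb k
    · have hk0 : t k = 0 := h0 k hk
      have hki : k ≠ i := fun h => by subst h; linarith [hi.1]
      have hkj : k ≠ j := fun h => by subst h; linarith [hj.1]
      simp only [Pi.add_apply, Pi.smul_apply, smul_eq_mul, hd, if_neg hki, if_neg hkj,
        mul_zero, add_zero, hk0]
    · have hk1 : t k = 1 := h1 k hk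
      have hki : k ≠ i := fun h => by subst h; linarith [hi.2]
      have hkj : k ≠ j := fun h => by subst h; linarith [hj.2]
      simp only [Pi.add_apply, Pi.smul_apply, smul_eq_mul, hd, if_neg hki, if_neg hkj,
        mul_zero, add_zero, hk1]
    · rw [hd, oddF_perturb I t s σ hij]
      set c : ℝ := (if i ∈ I then (-1:ℝ) else 1) + σ * (if j ∈ I then (-1:ℝ) else 1) with hc
      by_cases htight : oddF I t = 1
      · have hc0 : c = 0 := by rw [hc]; exact hσpat I hIo htight
        rw [hc0, mul_zero, add_zero]
        exact hineq I hIo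
      · have hslack : 1 < oddF I t := lt_of_le_of_ne (hineq I hIo) (Ne.symm htight)
        have hεI : ε ≤ (oddF I t - 1) / 2 := by
          apply hεle
          simp only [hE, Finset.mem_insert, Finset.mem_image]
          right; right; right; right
          exact ⟨I, by simp [hT, hIo, hslack], rfl⟩
        have hcb : |c| ≤ 2 := by
          rw [hc]; rcases hσ1 with rfl | rfl <;> split_ifs <;> norm_num
        have habs : |s * c| ≤ ε * 2 := by
          rw [abs_mul]
          exact mul_le_mul hs hcb (abs_nonneg _) (le_of_lt hεpos)
        have := neg_abs_le (s * c)
        linarith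
  have hmem1 : t + ε • d ∈ Pset S₀ S₁ := key ε (by rw [abs_of_pos hεpos])
  have hmem2 : t + (-ε) • d ∈ Pset S₀ S₁ := key (-ε) (by rw [abs_neg, abs_of_pos hεpos])
  have hseg : t ∈ openSegment ℝ (t + (-ε) • d) (t + ε • d) := by
    refine ⟨1/2, 1/2, by norm_num, by norm_num, by norm_num, ?_⟩
    funext k
    simp only [Pi.add_apply, Pi.smul_apply, smul_eq_mul]
    ring
  have := hext.2 hmem2 hmem1 hseg
  have h := congrFun this i
  have hdi : d i = 1 := by simp [hd]
  rw [Pi.add_apply, Pi.smul_apply, smul_eq_mul, hdi, mul_one] at h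
  linarith

lemma single_frac {S₀ S₁ : Set (Fin n)} {t : Fin n → ℝ} (htP : t ∈ Pset S₀ S₁)
    {i : Fin n} (hi : 0 < t i ∧ t i < 1) (hothers : ∀ j, j ≠ i → t j = 0 ∨ t j = 1) :
    False := by
  obtain ⟨hb, -, -, hineq⟩ := htP
  set K : Finset (Fin n) := Finset.univ.filter (fun k => t k = 1) with hK
  have hiK : i ∉ K := by simp [hK]; intro h; linarith [hi.2, h]
  have hK1 : ∀ k ∈ K, t k = 1 := by intro k hk; simpa [hK] using hk
  have hK0 : ∀ k, k ≠ i → k ∉ K → t k = 0 := by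
    intro k hki hk
    rcases hothers k hki with h | h
    · exact h
    · exact absurd (by simp [hK, h]) hk
  rcases Nat.even_or_odd K.card with hev | hod
  · have hodd : Odd (insert i K).card := by
      rw [Finset.card_insert_of_notMem hiK]
      exact Even.add_one hev
    have hval : oddF (insert i K) t = 1 - t i := by
      rw [oddF, Finset.sum_eq_single i]
      · simp [hiK]
      · intro k _ hki
        by_cases hk : k ∈ K
        · simp [Finset.mem_insert, hk, hK1 k hk]
        · simp [Finset.mem_insert, hki, hk, hK0 k hki hk]
      · intro h; exact absurd (Finset.mem_univ i) h
    have := hineq _ hodd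
    rw [hval] at this
    linarith [hi.1]
  · have hval : oddF K t = t i := by
      rw [oddF, Finset.sum_eq_single i]
      · simp [hiK]
      · intro k _ hki
        by_cases hk : k ∈ K
        · simp [hk, hK1 k hk]
        · simp [hk, hK0 k hki hk]
      · intro h; exact absurd (Finset.mem_univ i) h
    have := hineq _ hod
    rw [hval] at this
    linarith [hi.2]


lemma extreme_subset_Vset (S₀ S₁ : Set (Fin n)) :
    Set.extremePoints ℝ (Pset S₀ S₁) ⊆ Vset S₀ S₁ := by
  intro t ht
  have htP : t ∈ Pset S₀ S₁ := ht.1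
  refine ⟨htP, ?_⟩
  by_contra hcon
  push_neg at hcon
  obtain ⟨i, hi0, hi1⟩ := hcon
  have hb := htP.1
  have hifrac : 0 < t i ∧ t i < 1 := by
    constructor
    · exact lt_of_le_of_ne (hb i).1 (Ne.symm hi0)
    · exact lt_of_le_of_ne (hb i).2 hi1
  by_cases hsingle : ∀ j, j ≠ i → t j = 0 ∨ t j = 1
  · exact single_frac htP hifrac hsingle
  · push_neg at hsingle
    obtain ⟨j, hji, hj0, hj1⟩ := hsingle
    have hjfrac : 0 < t j ∧ t j < 1 := by
      constructor
      · exact lt_of_le_of_ne (hb j).1 (Ne.symm hj0)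
      · exact lt_of_le_of_ne (hb j).2 hj1
    have hij : i ≠ j := Ne.symm hji
    -- choose sign σ
    by_cases hcase : ∃ J : Finset (Fin n), Odd J.card ∧ oddF J t = 1 ∧ (i ∈ J ↔ j ∈ J)
    · obtain ⟨J, hJo, hJt, hJs⟩ := hcase
      refine perturb_mem S₀ S₁ t htP hij hifrac hjfrac (-1) (Or.inr rfl) ?_ ht
      intro I hIo hIt
      have hsame : i ∈ I ↔ j ∈ I := by
        by_contra hdiff
        exact tight_pattern htP hij hifrac hjfrac hJo hIo hJt hIt hJs hdiff
      by_cases h : i ∈ I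
      · rw [if_pos h, if_pos (hsame.1 h)]; ring
      · rw [if_neg h, if_neg (fun hh => h (hsame.2 hh))]; ring
    · push_neg at hcase
      refine perturb_mem S₀ S₁ t htP hij hifrac hjfrac 1 (Or.inl rfl) ?_ ht
      intro I hIo hIt
      rcases hcase I hIo hIt with ⟨h, h2⟩ | ⟨h, h2⟩
      · rw [if_pos h, if_neg h2]; ring
      · rw [if_neg h, if_pos h2]; ring

lemma isClosed_Pset (S₀ S₁ : Set (Fin n)) : IsClosed (Pset S₀ S₁) := by
  have h1 : Pset S₀ S₁ =
      (⋂ i, {t : Fin n → ℝ | 0 ≤ t i} ∩ {t | t i ≤ 1}) ∩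
      ((⋂ i ∈ S₀, {t : Fin n → ℝ | t i = 0}) ∩
      ((⋂ i ∈ S₁, {t : Fin n → ℝ | t i = 1}) ∩
      (⋂ I ∈ {I : Finset (Fin n) | Odd I.card}, {t : Fin n → ℝ | 1 ≤ oddF I t}))) := by
    ext t
    simp only [Pset, Set.mem_setOf_eq, Set.mem_inter_iff, Set.mem_iInter]
  rw [h1]
  have hcont : ∀ I : Finset (Fin n), Continuous (oddF I) := by
    intro I
    apply continuous_finset_sum
    intro k _
    by_cases h : k ∈ I
    · simp only [if_pos h]
      exact continuous_const.sub (continuous_apply k)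
    · simp only [if_neg h]
      exact continuous_apply k
  refine IsClosed.inter (isClosed_iInter fun i => IsClosed.inter ?_ ?_)
    (IsClosed.inter (isClosed_iInter fun i => isClosed_iInter fun _ => ?_)
      (IsClosed.inter (isClosed_iInter fun i => isClosed_iInter fun _ => ?_)
        (isClosed_iInter fun I => isClosed_iInter fun _ => ?_)))
  · exact isClosed_le continuous_const (continuous_apply i)
  · exact isClosed_le (continuous_apply i) continuous_const
  · exact isClosed_eq (continuous_apply i) continuous_const
  · exact isClosed_eq (continuous_apply i) continuous_const
  · exact isClosed_le continuous_const (hcont I)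

lemma isCompact_Pset (S₀ S₁ : Set (Fin n)) : IsCompact (Pset S₀ S₁) := by
  have hbox : IsCompact (Set.pi Set.univ fun _ : Fin n => Set.Icc (0:ℝ) 1) :=
    isCompact_univ_pi fun _ => isCompact_Icc
  apply IsCompact.of_isClosed_subset hbox (isClosed_Pset S₀ S₁)
  intro t ht i _
  exact ⟨(ht.1 i).1, (ht.1 i).2⟩

lemma finite_Vset (S₀ S₁ : Set (Fin n)) : (Vset S₀ S₁).Finite := by
  have hsub : Vset S₀ S₁ ⊆ Set.pi Set.univ (fun _ : Fin n => ({0, 1} : Set ℝ)) := by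
    intro t ht i _
    rcases ht.2 i with h | h <;> simp [h]
  exact Set.Finite.subset (Set.Finite.pi fun _ => (Set.finite_singleton (1:ℝ)).insert 0) hsub

/-- The parity polytope theorem. -/
theorem Pset_eq_convexHull (S₀ S₁ : Set (Fin n)) :
    Pset S₀ S₁ = convexHull ℝ (Vset S₀ S₁) := by
  apply Set.Subset.antisymm
  · have hKM := closure_convexHull_extremePoints (isCompact_Pset S₀ S₁) (convex_Pset S₀ S₁)
    rw [← hKM]
    refine closure_minimal (convexHull_mono (extreme_subset_Vset S₀ S₁)) ?_
    exact Set.Finite.isClosed_convexHull ℝ (finite_Vset S₀ S₁)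
  · exact convexHull_min (fun v hv => hv.1) (convex_Pset S₀ S₁)



-- rank analysis
lemma rank_one_structure {d n : ℕ} (B : Fin n → Set (F2 d)) (hrank : blockRank B = 1) :
    ∃ v : F2 d, v ≠ 0 ∧ ∀ i, B i ⊆ {0, v} := by
  have hz2 : ∀ a : ZMod 2, a = 0 ∨ a = 1 := by decide
  set U : Set (F2 d) := ⋃ i, B i with hU
  obtain ⟨v, hvU, hv⟩ : ∃ u ∈ U, u ≠ 0 := by
    by_contra h
    push_neg at h
    have hsub : U ⊆ ({0} : Set (F2 d)) := fun u hu => h u hu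
    have hle : Submodule.span (ZMod 2) U ≤ ⊥ := by
      rw [← Submodule.span_zero_singleton (R := ZMod 2) (M := F2 d)]
      exact Submodule.span_mono hsub
    rw [le_bot_iff] at hle
    rw [blockRank, hle] at hrank
    simp at hrank
  refine ⟨v, hv, fun i w hw => ?_⟩
  have hwU : w ∈ U := Set.mem_iUnion.2 ⟨i, hw⟩
  by_contra hcon
  simp only [Set.mem_insert_iff, Set.mem_singleton_iff, not_or] at hcon
  obtain ⟨hw0, hwv⟩ := hcon
  have hli : LinearIndependent (ZMod 2) ![v, w] := by
    rw [LinearIndependent.pair_iff]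
    intro s t hst
    rcases hz2 s with rfl | rfl <;> rcases hz2 t with rfl | rfl
    · exact ⟨rfl, rfl⟩
    · exfalso; apply hw0; simpa using hst
    · exfalso; apply hv; simpa using hst
    · exfalso
      apply hwv
      have h1 : v + w = 0 := by simpa using hst
      have h2 : w = -v := by
        rw [eq_neg_iff_add_eq_zero, add_comm]
        exact h1
      have h3 : -v = v := by
        funext j
        have : ∀ a : ZMod 2, -a = a := by decide
        simp [this]
      rw [h2, h3]
  have hsetle : ({v, w} : Set (F2 d)) ⊆ U := by
    intro x hx
    rcases hx with rfl | hx
    · exact hvU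
    · rw [Set.mem_singleton_iff] at hx; subst hx; exact hwU
  have hle2 : Submodule.span (ZMod 2) ({v, w} : Set (F2 d)) ≤ Submodule.span (ZMod 2) U :=
    Submodule.span_mono hsetle
  have hrange : ({v, w} : Set (F2 d)) = Set.range ![v, w] := by
    ext x
    simp [Matrix.range_cons, Matrix.range_empty]
    tauto
  have hcard : Module.finrank (ZMod 2) (Submodule.span (ZMod 2) ({v, w} : Set (F2 d))) = 2 := by
    rw [hrange, finrank_span_eq_card hli]
    simp
  have hmono := Submodule.finrank_mono hle2
  rw [hcard] at hmono
  rw [blockRank] at hrank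
  rw [hrank] at hmono
  omega

noncomputable def phiMap (d n : ℕ) (v : F2 d) : (Fin n → ℝ) →ᵃ[ℝ] (Fin n → F2 d → ℝ) where
  toFun := fun t i ω => (if ω = v then t i else 0) + (if ω = 0 then 1 - t i else 0)
  linear :=
    { toFun := fun t i ω => (if ω = v then t i else 0) - (if ω = 0 then t i else 0)
      map_add' := by
        intro x y; funext i ω
        simp only [Pi.add_apply]
        split_ifs <;> ring
      map_smul' := by
        intro c x; funext i ω
        simp only [Pi.smul_apply, smul_eq_mul, RingHom.id_apply]
        split_ifs <;> ring }
  map_vadd' := by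
    intro p u; funext i ω
    simp only [vadd_eq_add, Pi.add_apply, LinearMap.coe_mk, AddHom.coe_mk]
    split_ifs <;> ring

variable {d n : ℕ}

lemma phiMap_apply (v : F2 d) (t : Fin n → ℝ) (i : Fin n) (ω : F2 d) :
    phiMap d n v t i ω = (if ω = v then t i else 0) + (if ω = 0 then 1 - t i else 0) := rfl

lemma phiMap_apply_v {v : F2 d} (hv : v ≠ 0) (t : Fin n → ℝ) (i : Fin n) :
    phiMap d n v t i v = t i := by
  rw [phiMap_apply, if_pos rfl, if_neg hv]
  ring

lemma phiMap_apply_zero {v : F2 d} (hv : v ≠ 0) (t : Fin n → ℝ) (i : Fin n) :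
    phiMap d n v t i 0 = 1 - t i := by
  rw [phiMap_apply, if_neg (Ne.symm hv), if_pos rfl]
  ring

lemma phiMap_apply_other {v : F2 d} (t : Fin n → ℝ) (i : Fin n) {ω : F2 d}
    (h1 : ω ≠ 0) (h2 : ω ≠ v) : phiMap d n v t i ω = 0 := by
  rw [phiMap_apply, if_neg h2, if_neg h1]
  ring

lemma dot_zero (η : F2 d) : (∑ j, η j * (0 : F2 d) j) = 0 := by simp


lemma zmod2_cases : ∀ a : ZMod 2, a = 0 ∨ a = 1 := by decide

section Transfer

variable {B : Fin n → Set (F2 d)} {v : F2 d}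

lemma mem_block_cases (hsub : ∀ i, B i ⊆ {0, v}) {i : Fin n} {ω : F2 d} (hω : ω ∈ B i) :
    ω = 0 ∨ ω = v := by
  rcases hsub i hω with h | h
  · exact Or.inl h
  · exact Or.inr h

lemma phiMap_zero_off (hv : v ≠ 0) (hsub : ∀ i, B i ⊆ {0, v}) {t : Fin n → ℝ}
    (hf0 : ∀ i, v ∉ B i → t i = 0) (hf1 : ∀ i, (0 : F2 d) ∉ B i → t i = 1) :
    ∀ i ω, ω ∉ B i → phiMap d n v t i ω = 0 := by
  intro i ω hω
  by_cases h2 : ω = v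
  · subst h2; rw [phiMap_apply_v hv, hf0 i hω]
  · by_cases h1 : ω = 0
    · subst h1; rw [phiMap_apply_zero hv, hf1 i hω]; ring
    · exact phiMap_apply_other t i h1 h2

lemma sum_pair_support (hv : v ≠ 0) (f : F2 d → ℝ) (hf : ∀ ω, ω ≠ 0 → ω ≠ v → f ω = 0) :
    (∑ ω : F2 d, f ω) = f 0 + f v := by
  rw [← Finset.sum_pair (show (0 : F2 d) ≠ v from Ne.symm hv)]
  apply (Finset.sum_subset (Finset.subset_univ _) ?_).symm
  intro ω _ hω
  simp only [Finset.mem_insert, Finset.mem_singleton, not_or] at hω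
  exact hf ω hω.1 hω.2

lemma phiMap_nonneg {t : Fin n → ℝ} (hv : v ≠ 0) (hb : ∀ i, 0 ≤ t i ∧ t i ≤ 1) :
    ∀ (i : Fin n) (ω : F2 d), 0 ≤ phiMap d n v t i ω := by
  intro i ω
  by_cases h2 : ω = v
  · subst h2; rw [phiMap_apply_v hv]; exact (hb i).1
  · by_cases h1 : ω = 0
    · subst h1; rw [phiMap_apply_zero hv]; linarith [(hb i).2]
    · rw [phiMap_apply_other t i h1 h2]

lemma phiMap_row_sum (hv : v ≠ 0) (t : Fin n → ℝ) (i : Fin n) :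
    (∑ ω : F2 d, phiMap d n v t i ω) = 1 := by
  rw [sum_pair_support hv _ (fun ω h1 h2 => phiMap_apply_other t i h1 h2),
    phiMap_apply_zero hv, phiMap_apply_v hv]
  ring

lemma inner_sum_zero (hv : v ≠ 0) (hsub : ∀ i, B i ⊆ {0, v}) {t : Fin n → ℝ}
    (hf1 : ∀ i, (0 : F2 d) ∉ B i → t i = 1) {η : F2 d} (hη : (∑ j, η j * v j) = 1)
    (i : Fin n) :
    (∑ ω ∈ Finset.univ.filter (fun ω : F2 d => ω ∈ B i ∧ (∑ j, η j * ω j) = 0),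
      phiMap d n v t i ω) = 1 - t i := by
  rw [Finset.sum_filter, Finset.sum_eq_single (0 : F2 d)]
  · by_cases h : (0 : F2 d) ∈ B i
    · rw [if_pos ⟨h, dot_zero η⟩, phiMap_apply_zero hv]
    · rw [if_neg (fun hc => h hc.1), hf1 i h]; ring
  · intro ω _ hω
    rw [if_neg]
    rintro ⟨hωB, hωdot⟩
    rcases mem_block_cases hsub hωB with h | h
    · exact hω h
    · subst h
      rw [hη] at hωdot
      exact one_ne_zero hωdot
  · intro h; exact absurd (Finset.mem_univ _) h

lemma inner_sum_one (hv : v ≠ 0) (hsub : ∀ i, B i ⊆ {0, v}) {t : Fin n → ℝ}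
    (hf0 : ∀ i, v ∉ B i → t i = 0) {η : F2 d} (hη : (∑ j, η j * v j) = 1)
    (i : Fin n) :
    (∑ ω ∈ Finset.univ.filter (fun ω : F2 d => ω ∈ B i ∧ (∑ j, η j * ω j) = 1),
      phiMap d n v t i ω) = t i := by
  rw [Finset.sum_filter, Finset.sum_eq_single v]
  · by_cases h : v ∈ B i
    · rw [if_pos ⟨h, hη⟩, phiMap_apply_v hv]
    · rw [if_neg (fun hc => h hc.1), hf0 i h]
  · intro ω _ hω
    rw [if_neg]
    rintro ⟨hωB, hωdot⟩
    rcases mem_block_cases hsub hωB with h | h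
    · subst h
      rw [dot_zero η] at hωdot
      exact zero_ne_one hωdot
    · exact hω h
  · intro h; exact absurd (Finset.mem_univ _) h

lemma losLHS_phi_dot_one (hv : v ≠ 0) (hsub : ∀ i, B i ⊆ {0, v}) {t : Fin n → ℝ}
    (hf0 : ∀ i, v ∉ B i → t i = 0) (hf1 : ∀ i, (0 : F2 d) ∉ B i → t i = 1)
    {η : F2 d} (hη : (∑ j, η j * v j) = 1) (I : Finset (Fin n)) :
    losLHS B η I (phiMap d n v t) = oddF I t := by
  rw [losLHS, oddF_eq_sum]
  congr 1
  · exact Finset.sum_congr rfl fun i _ => inner_sum_zero hv hsub hf1 hη i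
  · exact Finset.sum_congr rfl fun i _ => inner_sum_one hv hsub hf0 hη i

lemma losLHS_phi_dot_zero (hv : v ≠ 0) (hsub : ∀ i, B i ⊆ {0, v}) {t : Fin n → ℝ}
    (hb : ∀ i, 0 ≤ t i ∧ t i ≤ 1)
    (hf0 : ∀ i, v ∉ B i → t i = 0) (hf1 : ∀ i, (0 : F2 d) ∉ B i → t i = 1)
    {η : F2 d} (hη : (∑ j, η j * v j) = 0) {I : Finset (Fin n)} (hI : Odd I.card) :
    1 ≤ losLHS B η I (phiMap d n v t) := by
  have hφ0 := phiMap_zero_off hv hsub hf0 hf1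
  have hφnn := phiMap_nonneg hv hb
  have hdotB : ∀ (i : Fin n) (ω : F2 d), ω ∈ B i → (∑ j, η j * ω j) = 0 := by
    intro i ω hω
    rcases mem_block_cases hsub hω with h | h
    · subst h; exact dot_zero η
    · subst h; exact hη
  have hrow : ∀ i, (∑ ω ∈ Finset.univ.filter
      (fun ω : F2 d => ω ∈ B i ∧ (∑ j, η j * ω j) = 0), phiMap d n v t i ω) = 1 := by
    intro i
    rw [Finset.sum_subset (Finset.filter_subset _ _) ?_]
    · exact phiMap_row_sum hv t i
    · intro ω _ hω
      rw [Finset.mem_filter] at hω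
      push_neg at hω
      by_cases hωB : ω ∈ B i
      · exact absurd (hdotB i ω hωB) (hω (Finset.mem_univ ω) hωB)
      · exact hφ0 i ω hωB
  rw [losLHS]
  have h1 : (∑ i ∈ I, ∑ ω ∈ Finset.univ.filter
      (fun ω : F2 d => ω ∈ B i ∧ (∑ j, η j * ω j) = 0), phiMap d n v t i ω) = I.card := by
    rw [Finset.sum_congr rfl fun i _ => hrow i]
    simp
  have h2 : 0 ≤ (∑ i ∈ Iᶜ, ∑ ω ∈ Finset.univ.filter
      (fun ω : F2 d => ω ∈ B i ∧ (∑ j, η j * ω j) = 1), phiMap d n v t i ω) :=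
    Finset.sum_nonneg fun i _ => Finset.sum_nonneg fun ω _ => hφnn i ω
  have h3 : 1 ≤ I.card := by
    rcases hI with ⟨c, hc⟩; omega
  have h4 : (1 : ℝ) ≤ (I.card : ℝ) := by exact_mod_cast h3
  rw [h1]
  linarith

end Transfer

section Images

variable {B : Fin n → Set (F2 d)} {v : F2 d}

lemma two_smul_zero : ∀ w : F2 d, w + w = 0 := by
  intro w; funext j; exact CharTwo.add_self_eq_zero (w j)

lemma image_Vset (hv : v ≠ 0) (hsub : ∀ i, B i ⊆ {0, v}) :
    phiMap d n v '' Vset {i | v ∉ B i} {i | (0 : F2 d) ∉ B i}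
      = incVec '' { ξ | IsCyclicTransversal B ξ } := by
  apply Set.Subset.antisymm
  · rintro x ⟨t, ht, rfl⟩
    obtain ⟨⟨hb, hf0, hf1, hineq⟩, hint⟩ := ht
    set ξ : Fin n → F2 d := fun i => if t i = 1 then v else 0 with hξ
    set A : Finset (Fin n) := Finset.univ.filter (fun k => t k = 1) with hA
    have hpattern : ∀ k, (k ∈ A ∧ t k = 1) ∨ (k ∉ A ∧ t k = 0) := by
      intro k
      rcases hint k with h | h
      · right
        refine ⟨?_, h⟩
        rw [hA, Finset.mem_filter]
        rintro ⟨-, h1⟩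
        rw [h] at h1
        norm_num at h1
      · left
        exact ⟨by rw [hA, Finset.mem_filter]; exact ⟨Finset.mem_univ _, h⟩, h⟩
    have hAeven : Even A.card := by
      by_contra hodd
      rw [Nat.not_even_iff_odd] at hodd
      have h1 := hineq A hodd
      rw [oddF_integral A A t hpattern] at h1
      simp at h1
      linarith
    refine ⟨ξ, ⟨fun i => ?_, ?_⟩, ?_⟩
    · rw [hξ]
      simp only
      by_cases h : t i = 1
      · rw [if_pos h]
        by_contra hc
        have h0 := hf0 i hc
        rw [h0] at h
        norm_num at h
      · rw [if_neg h]
        by_contra hc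
        exact h (hf1 i hc)
    · have h1 : (∑ i, ξ i) = ∑ i ∈ A, v := by
        rw [hA, Finset.sum_filter, hξ]
      rw [h1, Finset.sum_const]
      obtain ⟨c, hc⟩ := hAeven
      rw [hc, add_smul, ← smul_add, two_smul_zero v, smul_zero]
    · funext i ω
      have hval : phiMap d n v t i ω = incVec ξ i ω := by
        by_cases h : t i = 1
        · have hξi : ξ i = v := by rw [hξ]; simp only [if_pos h]
          by_cases hω : ω = v
          · subst hω
            rw [phiMap_apply_v hv, h, incVec, if_pos hξi]
          · by_cases hω0 : ω = 0
            · subst hω0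
              rw [phiMap_apply_zero hv, h, incVec,
                if_neg (by rw [hξi]; exact hv)]
              ring
            · rw [phiMap_apply_other t i hω0 hω, incVec,
                if_neg (by rw [hξi]; exact fun hh => hω hh.symm)]
        · have hti : t i = 0 := by
            rcases hint i with h0 | h1
            · exact h0
            · exact absurd h1 h
          have hξi : ξ i = 0 := by rw [hξ]; simp only [if_neg h]
          by_cases hω : ω = v
          · subst hω
            rw [phiMap_apply_v hv, hti, incVec, if_neg (by rw [hξi]; exact Ne.symm hv)]
          · by_cases hω0 : ω = 0
            · subst hω0
              rw [phiMap_apply_zero hv, hti, incVec, if_pos hξi]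
              ring
            · rw [phiMap_apply_other t i hω0 hω, incVec,
                if_neg (by rw [hξi]; exact fun hh => hω0 hh.symm)]
      rw [← hval]
  · rintro x ⟨ξ, hξmem, rfl⟩
    obtain ⟨hξB, hξsum⟩ := hξmem
    set t : Fin n → ℝ := fun i => if ξ i = v then 1 else 0 with ht
    set A : Finset (Fin n) := Finset.univ.filter (fun k => ξ k = v) with hA
    have hξ01 : ∀ i, ξ i = 0 ∨ ξ i = v := fun i => mem_block_cases hsub (hξB i)
    have hpattern : ∀ k, (k ∈ A ∧ t k = 1) ∨ (k ∉ A ∧ t k = 0) := by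
      intro k
      by_cases h : ξ k = v
      · left
        exact ⟨by rw [hA, Finset.mem_filter]; exact ⟨Finset.mem_univ _, h⟩,
          by rw [ht]; simp only [if_pos h]⟩
      · right
        refine ⟨?_, by rw [ht]; simp only [if_neg h]⟩
        rw [hA, Finset.mem_filter]
        rintro ⟨-, h1⟩
        exact h h1
    have hAeven : Even A.card := by
      by_contra hodd
      rw [Nat.not_even_iff_odd] at hodd
      have h1 : (∑ i, ξ i) = A.card • v := by
        rw [hA, ← Finset.sum_const, Finset.sum_filter]
        apply Finset.sum_congr rfl
        intro k _
        rcases hξ01 k with h | h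
        · rw [if_neg (by rw [h]; exact Ne.symm hv), h]
        · rw [if_pos h, h]
      obtain ⟨c, hc⟩ := hodd
      rw [h1, hc] at hξsum
      have h2 : (2 * c + 1) • v = v := by
        have h3 : (2 * c) • v = 0 := by
          rw [mul_comm, mul_smul, two_smul, two_smul_zero v, smul_zero]
        rw [add_smul, h3, zero_add, one_smul]
      rw [h2] at hξsum
      exact hv hξsum
    refine ⟨t, ⟨⟨fun i => ?_, fun i hi => ?_, fun i hi => ?_, fun I hIo => ?_⟩,
      fun i => ?_⟩, ?_⟩
    · rw [ht]; simp only; split_ifs <;> norm_num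
    · simp only [Set.mem_setOf_eq] at hi
      rw [ht]
      simp only
      exact if_neg (fun hc => hi (by rw [← hc]; exact hξB i))
    · simp only [Set.mem_setOf_eq] at hi
      rcases hξ01 i with h0 | hv'
      · exact absurd (h0 ▸ hξB i) hi
      · rw [ht]; simp only [if_pos hv']
    · rw [oddF_integral I A t hpattern]
      have := card_sdiff_union_pos I A hIo hAeven
      exact_mod_cast this
    · rw [ht]; simp only; split_ifs <;> simp
    · funext i ω
      by_cases h : ξ i = v
      · have hti : t i = 1 := by rw [ht]; simp only [if_pos h]
        by_cases hω : ω = v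
        · subst hω
          rw [phiMap_apply_v hv, hti, incVec, if_pos h]
        · by_cases hω0 : ω = 0
          · subst hω0
            rw [phiMap_apply_zero hv, hti, incVec, if_neg (by rw [h]; exact hv)]
            ring
          · rw [phiMap_apply_other t i hω0 hω, incVec,
              if_neg (by rw [h]; exact fun hh => hω hh.symm)]
      · have h0 : ξ i = 0 := by
          rcases hξ01 i with h1 | h1
          · exact h1
          · exact absurd h1 h
        have hti : t i = 0 := by rw [ht]; simp only [if_neg h]
        by_cases hω : ω = v
        · subst hω
          rw [phiMap_apply_v hv, hti, incVec, if_neg (by rw [h0]; exact Ne.symm hv)]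
        · by_cases hω0 : ω = 0
          · subst hω0
            rw [phiMap_apply_zero hv, hti, incVec, if_pos h0]
            ring
          · rw [phiMap_apply_other t i hω0 hω, incVec,
              if_neg (by rw [h0]; exact fun hh => hω0 hh.symm)]

lemma image_Pset (hv : v ≠ 0) (hsub : ∀ i, B i ⊆ {0, v}) :
    phiMap d n v '' Pset {i | v ∉ B i} {i | (0 : F2 d) ∉ B i}
      = { x ∈ TP B | ∀ (η : F2 d), η ≠ 0 → ∀ I : Finset (Fin n), Odd I.card →
          1 ≤ losLHS B η I x } := by
  apply Set.Subset.antisymm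
  · rintro x ⟨t, ⟨hb, hf0, hf1, hineq⟩, rfl⟩
    have hf0' : ∀ i, v ∉ B i → t i = 0 := fun i hi => hf0 i hi
    have hf1' : ∀ i, (0 : F2 d) ∉ B i → t i = 1 := fun i hi => hf1 i hi
    refine ⟨⟨phiMap_nonneg hv hb, phiMap_zero_off hv hsub hf0' hf1',
      fun i => phiMap_row_sum hv t i⟩, ?_⟩
    intro η hη I hIo
    rcases zmod2_cases (∑ j, η j * v j) with hdot | hdot
    · exact losLHS_phi_dot_zero hv hsub hb hf0' hf1' hdot hIo
    · rw [losLHS_phi_dot_one hv hsub hf0' hf1' hdot]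
      exact hineq I hIo
  · rintro x ⟨⟨hnn, hzero, hsum⟩, hlos⟩
    set t : Fin n → ℝ := fun i => x i v with ht
    have hsupp : ∀ (i : Fin n) (ω : F2 d), ω ≠ 0 → ω ≠ v → x i ω = 0 := by
      intro i ω h1 h2
      apply hzero
      intro hω
      rcases mem_block_cases hsub hω with h | h
      · exact h1 h
      · exact h2 h
    have hx0 : ∀ i, x i 0 = 1 - x i v := by
      intro i
      have hs := hsum i
      rw [sum_pair_support hv (x i) (hsupp i)] at hs
      linarith
    have hforced0 : ∀ i, v ∉ B i → t i = 0 := fun i hi => hzero i v hi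
    have hforced1 : ∀ i, (0 : F2 d) ∉ B i → t i = 1 := by
      intro i hi
      have h1 := hzero i 0 hi
      rw [hx0 i] at h1
      rw [ht]
      simp only
      linarith
    have hxeq : phiMap d n v t = x := by
      funext i ω
      by_cases h2 : ω = v
      · subst h2; rw [phiMap_apply_v hv]
      · by_cases h1 : ω = 0
        · subst h1
          rw [phiMap_apply_zero hv, hx0 i]
        · rw [phiMap_apply_other t i h1 h2]
          exact (hsupp i ω h1 h2).symm
    refine ⟨t, ⟨fun i => ⟨hnn i v, ?_⟩, hforced0, hforced1, fun I hIo => ?_⟩, hxeq⟩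
    · have h1 := hnn i 0
      rw [hx0 i] at h1
      rw [ht]
      simp only
      linarith
    · obtain ⟨j, hj⟩ : ∃ j, v j ≠ 0 := by
        by_contra h
        push_neg at h
        exact hv (funext h)
      have hvj : v j = 1 := by
        rcases zmod2_cases (v j) with h | h
        · exact absurd h hj
        · exact h
      set η₀ : F2 d := fun k => if k = j then 1 else 0 with hη₀
      have hη₀ne : η₀ ≠ 0 := by
        intro h
        have h1 := congrFun h j
        rw [hη₀] at h1
        simp at h1
      have hdot : (∑ k, η₀ k * v k) = 1 := by
        rw [hη₀]
        simp only
        rw [Finset.sum_congr rfl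
          (fun k _ => show (if k = j then (1 : ZMod 2) else 0) * v k
            = (if k = j then v k else 0) by split_ifs <;> ring)]
        rw [Finset.sum_ite_eq' Finset.univ j v, if_pos (Finset.mem_univ j), hvj]
      have h1 := hlos η₀ hη₀ne I hIo
      rw [← hxeq, losLHS_phi_dot_one hv hsub hforced0 hforced1 hdot] at h1
      exact h1

end Images

end S12

/-- CTPs of rank-1 block configurations are described by the LOS
inequalities within the transversal polytope. -/
theorem statement12 (d n : ℕ) (hn : 2 ≤ n) (B : Fin n → Set (F2 d))
    (hB : ∀ i, (B i).Nonempty) (hrank : blockRank B = 1) :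
    CTP B = { x ∈ TP B | ∀ (η : F2 d), η ≠ 0 → ∀ I : Finset (Fin n), Odd I.card →
      1 ≤ losLHS B η I x } := by
  obtain ⟨v, hv, hsub⟩ := S12.rank_one_structure B hrank
  have h1 := S12.Pset_eq_convexHull {i | v ∉ B i} {i | (0 : F2 d) ∉ B i}
  have h2 := S12.image_Vset hv hsub
  have h3 := S12.image_Pset hv hsub
  calc CTP B = convexHull ℝ (incVec '' { ξ | IsCyclicTransversal B ξ }) := rfl
    _ = convexHull ℝ (S12.phiMap d n v '' S12.Vset {i | v ∉ B i} {i | (0 : F2 d) ∉ B i}) := by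
          rw [h2]
    _ = S12.phiMap d n v '' (convexHull ℝ (S12.Vset {i | v ∉ B i} {i | (0 : F2 d) ∉ B i})) :=
          ((S12.phiMap d n v).image_convexHull _).symm
    _ = S12.phiMap d n v '' S12.Pset {i | v ∉ B i} {i | (0 : F2 d) ∉ B i} := by rw [← h1]
    _ = _ := h3
end

section
/- For every block configuration B in 𝔽₂^d of rank r and size s, the cyclic transversal polytope CTP[B] admits an extended formulation of size at most 2^r · s: there exist a natural number N ≤ 2^r · s, finitely many linear equations given by a matrix C and vector e (i.e., the affine constraint set {y ∈ ℝ^N : Cy = e}), and a linear map π : ℝ^N → ℝ^B such that π( { y ∈ ℝ^N : y ≥ 0 and Cy = e } ) = CTP[B]; in particular the polyhedron { y ∈ ℝ^N : y ≥ 0, Cy = e } is described by at most 2^r · s linear inequalities besides equations. -/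
open scoped Classical

/-!
A cyclic transversal `ξ` is the same thing as a path from `(0, 0)` to `(n, 0)` in the layered
network with nodes `(k, γ)`, `k ≤ n`, `γ` in the span `W` of the blocks, and an arc from `(i, γ)` to
`(i + 1, γ + ω)` for every `ω ∈ B i`: the path visits the partial sums of `ξ`. The unit flows from
`(0, 0)` to `(n, 0)` in this network live on `|W| · size B = 2 ^ rank B · size B` arcs, and as in
every acyclic network they are the convex combinations of path flows: a nonzero flow contains a
positive path, and subtracting the largest multiple of that path flow shrinks its support. Summing
a flow over `γ` sends the path flow of `ξ` to the incidence vector of `ξ`, so this projection maps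
the flow polytope onto `CTP B`.
-/

open Finset

section SupportedPolyhedron

variable {ι κ : Type*}

def supportedPolyhedron (S : Finset ι) (A : (ι → ℝ) →ₗ[ℝ] κ → ℝ) (e : κ → ℝ) :
    Set (ι → ℝ) :=
  {z | (∀ j, 0 ≤ z j) ∧ (∀ j ∉ S, z j = 0) ∧ A z = e}

variable {S : Finset ι} {A : (ι → ℝ) →ₗ[ℝ] κ → ℝ} {e : κ → ℝ}

lemma convex_supportedPolyhedron : Convex ℝ (supportedPolyhedron S A e) := by
  rintro z ⟨hz₀, hzS, hzA⟩ w ⟨hw₀, hwS, hwA⟩ a b ha hb hab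
  refine ⟨fun j => ?_, fun j hj => ?_, ?_⟩
  · simpa using add_nonneg (mul_nonneg ha (hz₀ j)) (mul_nonneg hb (hw₀ j))
  · simp [hzS j hj, hwS j hj]
  · rw [map_add, map_smul, map_smul, hzA, hwA, ← add_smul, hab, one_smul]

lemma inv_one_sub_smul_sub_mem_supportedPolyhedron {z p : ι → ℝ}
    (hz : z ∈ supportedPolyhedron S A e) (hp : p ∈ supportedPolyhedron S A e) {t : ℝ}
    (ht : t < 1) (hle : ∀ j, t * p j ≤ z j) :
    (1 - t)⁻¹ • (z - t • p) ∈ supportedPolyhedron S A e := by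
  have h₀ : 0 < 1 - t := sub_pos.2 ht
  refine ⟨fun j => ?_, fun j hj => ?_, ?_⟩
  · simpa using mul_nonneg (inv_nonneg.2 h₀.le) (sub_nonneg.2 (hle j))
  · simp [hz.2.1 j hj, hp.2.1 j hj]
  · rw [map_smul, map_sub, map_smul, hz.2.2, hp.2.2]
    match_scalars
    field_simp

theorem exists_matrix_image_eq_image_supportedPolyhedron [Fintype κ] [DecidableEq ι]
    {E : Type*} [AddCommGroup E] [Module ℝ E] (S : Finset ι) (A : (ι → ℝ) →ₗ[ℝ] κ → ℝ)
    (e : κ → ℝ) (π : (ι → ℝ) →ₗ[ℝ] E) :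
    ∃ (m : ℕ) (C : Matrix (Fin m) (Fin #S) ℝ) (f : Fin m → ℝ)
      (π' : (Fin #S → ℝ) →ₗ[ℝ] E),
      π' '' {y | (∀ k, 0 ≤ y k) ∧ C.mulVec y = f} = π '' supportedPolyhedron S A e := by
  let σ := Fintype.equivFin κ
  let extendByZero : (Fin #S → ℝ) →ₗ[ℝ] ι → ℝ :=
    LinearMap.pi fun j => if h : j ∈ S then LinearMap.proj (S.equivFin ⟨j, h⟩) else 0
  have extendByZero_apply (y : Fin #S → ℝ) (j : ι) :
      extendByZero y j = if h : j ∈ S then y (S.equivFin ⟨j, h⟩) else 0 := by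
    by_cases h : j ∈ S <;> simp [extendByZero, h]
  refine ⟨Fintype.card κ,
    LinearMap.toMatrix' (LinearMap.funLeft ℝ ℝ σ.symm ∘ₗ A ∘ₗ extendByZero),
    e ∘ σ.symm, π ∘ₗ extendByZero, ?_⟩
  rw [LinearMap.coe_comp, Set.image_comp]
  congr 1
  ext z
  have hσ : ∀ w : κ → ℝ, w ∘ σ.symm = e ∘ σ.symm ↔ w = e := fun w =>
    σ.symm.surjective.injective_comp_right.eq_iff
  simp only [LinearMap.toMatrix'_mulVec, LinearMap.coe_comp, Function.comp_apply,
    LinearMap.funLeft, LinearMap.coe_mk, AddHom.coe_mk, hσ, Set.mem_image, Set.mem_ofPred_eq]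
  constructor
  · rintro ⟨y, ⟨hy₀, hyA⟩, rfl⟩
    refine ⟨fun j => ?_, fun j hj => by simp [extendByZero_apply, hj], hyA⟩
    rw [extendByZero_apply]
    split_ifs
    exacts [hy₀ _, le_rfl]
  · rintro ⟨hz₀, hzS, hzA⟩
    have hz : extendByZero (fun k => z (S.equivFin.symm k)) = z := by
      ext j
      by_cases hj : j ∈ S <;> simp [extendByZero_apply, hj, hzS]
    exact ⟨_, ⟨fun k => hz₀ _, by rwa [hz]⟩, hz⟩

end SupportedPolyhedron

lemma Fin.sum_castSucc_sub_succ {M : Type*} [AddCommGroup M] {n : ℕ} (f : Fin (n + 1) → M) :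
    ∑ i : Fin n, (f i.castSucc - f i.succ) = f 0 - f (Fin.last n) := by
  rw [sum_sub_distrib, eq_sub_of_add_eq (Fin.sum_univ_castSucc f).symm,
    eq_sub_of_add_eq' (Fin.sum_univ_succ f).symm]
  abel

lemma Fin.partialSum_last {M : Type*} [AddCommMonoid M] {n : ℕ} (f : Fin n → M) :
    Fin.partialSum f (Fin.last n) = ∑ i, f i := by
  rw [Fin.partialSum, Fin.val_last, List.take_of_length_le (by simp), List.sum_ofFn]

noncomputable section Flow

variable {d n : ℕ}

/-- `(i, ω, δ)` is the arc from node `(i, δ)` to node `(i + 1, δ + ω)` of the layered network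
on `Fin (n + 1) × F2 d`. -/
abbrev Arc (n d : ℕ) : Type := Fin n × F2 d × F2 d

def outflow : (Arc n d → ℝ) →ₗ[ℝ] Fin (n + 1) × F2 d → ℝ :=
  LinearMap.pi fun v => Fin.lastCases 0 (fun i => ∑ ω, LinearMap.proj (i, ω, v.2)) v.1

def inflow : (Arc n d → ℝ) →ₗ[ℝ] Fin (n + 1) × F2 d → ℝ :=
  LinearMap.pi fun v => Fin.cases 0 (fun i => ∑ ω, LinearMap.proj (i, ω, v.2 - ω)) v.1

variable (z : Arc n d → ℝ) (i : Fin n) (ω δ : F2 d)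

@[simp] lemma outflow_castSucc : outflow z (i.castSucc, δ) = ∑ ω, z (i, ω, δ) := by
  simp [outflow]

@[simp] lemma outflow_last : outflow z (Fin.last n, δ) = 0 := by
  simp [outflow]

@[simp] lemma inflow_succ : inflow z (i.succ, δ) = ∑ ω, z (i, ω, δ - ω) := by
  simp [inflow]

@[simp] lemma inflow_zero : inflow z (0, δ) = 0 := by
  simp [inflow]

lemma outflow_single : outflow (Pi.single (i, ω, δ) 1) = Pi.single (i.castSucc, δ) (1 : ℝ) := by
  ext ⟨k, δ'⟩
  induction k using Fin.lastCases with
  | last => simp [(Fin.castSucc_lt_last i).ne']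
  | cast k =>
    rcases eq_or_ne k i with rfl | hk
    · simp [Pi.single_apply, ite_and, sum_ite_eq']
    · simp [hk]

lemma inflow_single : inflow (Pi.single (i, ω, δ) 1) = Pi.single (i.succ, δ + ω) (1 : ℝ) := by
  ext ⟨k, δ'⟩
  induction k using Fin.cases with
  | zero => simp [(Fin.succ_ne_zero i).symm]
  | succ k =>
    rcases eq_or_ne k i with rfl | hk
    · simp [Pi.single_apply, ite_and, sum_ite_eq', sub_eq_iff_eq_add]
    · simp [hk]

def unitDemand : Fin (n + 1) × F2 d → ℝ :=
  Pi.single (0, 0) 1 - Pi.single (Fin.last n, 0) 1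

variable (B : Fin n → Set (F2 d))

abbrev blockSpan : Submodule (ZMod 2) (F2 d) := Submodule.span (ZMod 2) (⋃ i, B i)

def flowArcs : Finset (Arc n d) :=
  univ.filter fun a => a.2.1 ∈ B a.1 ∧ a.2.2 ∈ blockSpan B

def flowPolytope : Set (Arc n d → ℝ) :=
  supportedPolyhedron (flowArcs B) (outflow - inflow) unitDemand

def flowProj : (Arc n d → ℝ) →ₗ[ℝ] Fin n → F2 d → ℝ :=
  LinearMap.pi fun i => LinearMap.pi fun ω => ∑ δ, LinearMap.proj (i, ω, δ)

variable {B}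

def pathFlow (ξ : Fin n → F2 d) : Arc n d → ℝ :=
  ∑ i, Pi.single (i, ξ i, Fin.partialSum ξ i.castSucc) 1

lemma pathFlow_apply (ξ : Fin n → F2 d) :
    pathFlow ξ (i, ω, δ) = if ω = ξ i ∧ δ = Fin.partialSum ξ i.castSucc then 1 else 0 := by
  simp [pathFlow, Pi.single_apply, ite_and]

lemma pathFlow_nonneg (ξ : Fin n → F2 d) (a : Arc n d) : 0 ≤ pathFlow ξ a := by
  obtain ⟨i, ω, δ⟩ := a
  rw [pathFlow_apply]
  split_ifs <;> norm_num

lemma outflow_sub_inflow_pathFlow (ξ : Fin n → F2 d) :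
    outflow (pathFlow ξ) - inflow (pathFlow ξ) =
      Pi.single (0, 0) 1 - Pi.single (Fin.last n, ∑ i, ξ i) 1 := by
  simp only [pathFlow, map_sum, outflow_single, inflow_single,
    ← sum_sub_distrib, ← Fin.partialSum_succ]
  rw [Fin.sum_castSucc_sub_succ fun k =>
    (Pi.single (k, Fin.partialSum ξ k) 1 : Fin (n + 1) × F2 d → ℝ)]
  simp [Fin.partialSum_last]

lemma partialSum_mem_blockSpan {ξ : Fin n → F2 d} (hξ : ∀ i, ξ i ∈ B i) (k : Fin (n + 1)) :
    Fin.partialSum ξ k ∈ blockSpan B := by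
  induction k using Fin.induction with
  | zero => simp
  | succ i ih =>
    rw [Fin.partialSum_succ]
    exact add_mem ih (Submodule.subset_span (Set.mem_iUnion_of_mem i (hξ i)))

lemma pathFlow_mem_flowPolytope {ξ : Fin n → F2 d} (hξ : IsCyclicTransversal B ξ) :
    pathFlow ξ ∈ flowPolytope B := by
  refine ⟨pathFlow_nonneg ξ, fun ⟨i, ω, δ⟩ hj => ?_, ?_⟩
  · rw [pathFlow_apply, if_neg]
    rintro ⟨rfl, rfl⟩
    exact hj (mem_filter.2 ⟨mem_univ _, hξ.1 i, partialSum_mem_blockSpan hξ.1 _⟩)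
  · rw [LinearMap.sub_apply, outflow_sub_inflow_pathFlow, hξ.2, unitDemand]

lemma flowProj_pathFlow (ξ : Fin n → F2 d) : flowProj (pathFlow ξ) = incVec ξ := by
  ext i ω
  simp [flowProj, pathFlow_apply, incVec, ite_and, eq_comm]

variable {z : Arc n d → ℝ}

lemma outflow_eq_of_mem_flowPolytope (hz : z ∈ flowPolytope B) (v : Fin (n + 1) × F2 d) :
    outflow z v = inflow z v + unitDemand v := by
  rw [← hz.2.2, LinearMap.sub_apply, Pi.sub_apply, add_sub_cancel]

lemma sum_outflow_castSucc : ∑ δ, outflow z (i.castSucc, δ) = ∑ ω, ∑ δ, z (i, ω, δ) := by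
  simp only [outflow_castSucc]
  exact sum_comm

lemma sum_inflow_succ : ∑ δ, inflow z (i.succ, δ) = ∑ ω, ∑ δ, z (i, ω, δ) := by
  simp only [inflow_succ]
  rw [sum_comm]
  exact sum_congr rfl fun ω _ => (Equiv.subRight ω).sum_comp fun δ => z (i, ω, δ)

lemma sum_unitDemand (k : Fin (n + 1)) :
    ∑ δ : F2 d, unitDemand (k, δ) =
      (if k = 0 then 1 else 0) - (if k = Fin.last n then 1 else 0) := by
  simp [unitDemand, Pi.single_apply, sum_sub_distrib, ite_and]

lemma sum_layer_eq_one (hz : z ∈ flowPolytope B) (i : Fin n) :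
    ∑ ω, ∑ δ, z (i, ω, δ) = 1 := by
  have supply : ∀ k : Fin (n + 1), ∑ δ, inflow z (k, δ) + (if k = 0 then 1 else 0) = 1 := by
    intro k
    induction k using Fin.induction with
    | zero => simp
    | succ i ih =>
      have h := sum_congr rfl fun δ (_ : δ ∈ univ) =>
        outflow_eq_of_mem_flowPolytope hz (i.castSucc, δ)
      rw [sum_add_distrib, sum_outflow_castSucc, sum_unitDemand,
        if_neg (Fin.castSucc_lt_last i).ne, sub_zero] at h
      rwa [sum_inflow_succ, if_neg (Fin.succ_ne_zero i), add_zero, h]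
  rw [← sum_inflow_succ, ← supply i.succ, if_neg (Fin.succ_ne_zero i), add_zero]

lemma sum_eq_of_mem_flowPolytope (hz : z ∈ flowPolytope B) : ∑ a, z a = n := by
  simp [Fintype.sum_prod_type, sum_layer_eq_one hz]

lemma unitDemand_castSucc :
    unitDemand (i.castSucc, δ) = if i.castSucc = 0 ∧ δ = 0 then 1 else 0 := by
  simp [unitDemand, Pi.single_apply, (Fin.castSucc_lt_last i).ne]

variable {i ω δ}

lemma le_inflow_succ (hz₀ : ∀ a, 0 ≤ z a) : z (i, ω, δ) ≤ inflow z (i.succ, δ + ω) := by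
  rw [inflow_succ]
  simpa using single_le_sum (fun ω' _ => hz₀ (i, ω', δ + ω - ω')) (mem_univ ω)

lemma eq_zero_of_inflow_last_pos (hz : z ∈ flowPolytope B) (h : 0 < inflow z (Fin.last n, δ)) :
    δ = 0 := by
  by_contra hδ
  have := outflow_eq_of_mem_flowPolytope hz (Fin.last n, δ)
  simp [unitDemand, hδ] at this
  linarith

lemma exists_cyclicTransversal_pos (hz : z ∈ flowPolytope B) :
    ∃ ξ, IsCyclicTransversal B ξ ∧ ∀ i, 0 < z (i, ξ i, Fin.partialSum ξ i.castSucc) := by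
  have hstep (i : Fin n) (δ : F2 d) :
      ∃ ω, 0 < outflow z (i.castSucc, δ) → 0 < z (i, ω, δ) := by
    by_cases h : 0 < outflow z (i.castSucc, δ)
    · rw [outflow_castSucc, Finset.sum_pos_iff_of_nonneg fun ω _ => hz.1 _] at h
      obtain ⟨ω, -, hω⟩ := h
      exact ⟨ω, fun _ => hω⟩
    · exact ⟨0, fun h' => absurd h' h⟩
  -- Walk greedily from the source along arcs carrying positive flow: conservation keeps the walk
  -- going, and at the last layer it can only arrive at the sink `(n, 0)`.
  choose next hnext using hstep
  let γ : Fin (n + 1) → F2 d := fun k => Fin.induction 0 (fun i δ => δ + next i δ) k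
  let ξ : Fin n → F2 d := fun i => next i (γ i.castSucc)
  have hγ : Fin.partialSum ξ = γ := by
    funext k
    induction k using Fin.induction with
    | zero => simp [γ]
    | succ i ih => simp [Fin.partialSum_succ, ih, γ, ξ]
  have harc_of_reach (i : Fin n) (h : i.castSucc = 0 ∨ 0 < inflow z (i.castSucc, γ i.castSucc)) :
      0 < z (i, ξ i, γ i.castSucc) := by
    refine hnext _ _ ?_
    rw [outflow_eq_of_mem_flowPolytope hz, unitDemand_castSucc]
    rcases h with h | h
    · simp [h, γ]
    · have : (0 : ℝ) ≤ if i.castSucc = 0 ∧ γ i.castSucc = 0 then 1 else 0 := by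
        split_ifs <;> norm_num
      linarith
  have hreach (k : Fin (n + 1)) : k = 0 ∨ 0 < inflow z (k, γ k) := by
    induction k using Fin.induction with
    | zero => exact Or.inl rfl
    | succ i ih => exact Or.inr ((harc_of_reach i ih).trans_le (le_inflow_succ hz.1))
  refine ⟨ξ, ⟨fun i => ?_, ?_⟩, fun i => hγ ▸ harc_of_reach i (hreach _)⟩
  · by_contra h
    exact (harc_of_reach i (hreach _)).ne'
      (hz.2.1 _ fun hm => h (mem_filter.1 hm).2.1)
  · rw [← Fin.partialSum_last, hγ]
    rcases hreach (Fin.last n) with h | h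
    · rw [h]; rfl
    · exact eq_zero_of_inflow_last_pos hz h

theorem flowPolytope_subset_convexHull :
    flowPolytope B ⊆ convexHull ℝ (pathFlow '' {ξ | IsCyclicTransversal B ξ}) := by
  -- Induction on the support: subtract from `z` the largest multiple of a path flow below it.
  intro z hz
  induction hm : #{a | z a ≠ 0} using Nat.strong_induction_on generalizing z with
  | _ m ih =>
  obtain ⟨ξ, hξ, hpos⟩ := exists_cyclicTransversal_pos hz
  have hp := pathFlow_mem_flowPolytope hξ
  have hpath : pathFlow ξ ∈ convexHull ℝ (pathFlow '' {ξ | IsCyclicTransversal B ξ}) :=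
    subset_convexHull ℝ _ ⟨ξ, hξ, rfl⟩
  rcases isEmpty_or_nonempty (Fin n) with hn | hn
  · convert hpath
    funext a
    exact isEmptyElim a.1
  obtain ⟨i₀, hi₀⟩ := Finite.exists_min fun i => z (i, ξ i, Fin.partialSum ξ i.castSucc)
  set t := z (i₀, ξ i₀, Fin.partialSum ξ i₀.castSucc) with ht_def
  have ht₀ : 0 < t := hpos i₀
  have hle (a : Arc n d) : t * pathFlow ξ a ≤ z a := by
    obtain ⟨i, ω, δ⟩ := a
    rw [pathFlow_apply]
    split_ifs with h
    · obtain ⟨rfl, rfl⟩ := h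
      simpa using hi₀ i
    · simpa using hz.1 _
  rcases lt_or_ge t 1 with ht₁ | ht₁
  · set z' := (1 - t)⁻¹ • (z - t • pathFlow ξ) with hz'_def
    have hz' := inv_one_sub_smul_sub_mem_supportedPolyhedron hz hp ht₁ hle
    have hsupp : #{a | z' a ≠ 0} < m := by
      rw [← hm]
      refine card_lt_card ((ssubset_iff_of_subset fun a => ?_).2
        ⟨(i₀, ξ i₀, Fin.partialSum ξ i₀.castSucc), ?_, ?_⟩)
      · simp only [mem_filter, mem_univ, true_and]
        intro ha hza
        have hpa : pathFlow ξ a = 0 := by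
          nlinarith [hle a, pathFlow_nonneg ξ a]
        simp [z', hza, hpa] at ha
      · simpa using ht₀.ne'
      · simp [z', pathFlow_apply, ← ht_def]
    have hdecomp : z = t • pathFlow ξ + (1 - t) • z' := by
      rw [hz'_def, smul_inv_smul₀ (sub_pos.2 ht₁).ne', add_sub_cancel]
    rw [hdecomp]
    exact convex_convexHull ℝ _ hpath (ih _ hsupp hz' rfl) ht₀.le (sub_pos.2 ht₁).le (by ring)
  · have hle' (a : Arc n d) : pathFlow ξ a ≤ z a :=
      (le_mul_of_one_le_left (pathFlow_nonneg ξ a) ht₁).trans (hle a)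
    have hsum : ∑ a, pathFlow ξ a = ∑ a, z a := by
      rw [sum_eq_of_mem_flowPolytope hp, sum_eq_of_mem_flowPolytope hz]
    have hzp : z = pathFlow ξ :=
      funext fun a => ((sum_eq_sum_iff_of_le fun a _ => hle' a).1 hsum a (mem_univ a)).symm
    rwa [hzp]

theorem flowPolytope_eq_convexHull :
    flowPolytope B = convexHull ℝ (pathFlow '' {ξ | IsCyclicTransversal B ξ}) := by
  refine flowPolytope_subset_convexHull.antisymm (convexHull_min ?_ convex_supportedPolyhedron)
  rintro _ ⟨ξ, hξ, rfl⟩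
  exact pathFlow_mem_flowPolytope hξ

variable (B)

theorem flowProj_image_flowPolytope : flowProj '' flowPolytope B = CTP B := by
  rw [flowPolytope_eq_convexHull, LinearMap.image_convexHull, ← Set.image_comp, CTP]
  congr 2
  exact funext flowProj_pathFlow

theorem card_flowArcs : #(flowArcs B) = 2 ^ blockRank B * blockSize B := by
  have hW : Fintype.card (blockSpan B) = 2 ^ blockRank B := by
    rw [Module.card_eq_pow_finrank (K := ZMod 2), ZMod.card, blockRank]
  have hlayer (i : Fin n) : #{p : F2 d × F2 d | p.1 ∈ B i ∧ p.2 ∈ blockSpan B} =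
      (B i).ncard * 2 ^ blockRank B := by
    rw [← univ_product_univ, filter_product (p := (· ∈ B i)) (q := (· ∈ blockSpan B)),
      card_product, ← Fintype.card_subtype, ← Fintype.card_subtype, hW,
      ← Nat.card_eq_fintype_card, Nat.card_coe_set_eq]
  rw [flowArcs, card_filter, Fintype.sum_prod_type]
  simp only [← card_filter, hlayer]
  rw [← sum_mul, mul_comm, blockSize]

end Flow

theorem statement15_general (d n : ℕ) (B : Fin n → Set (F2 d)) :
    ∃ N : ℕ, N ≤ 2 ^ blockRank B * blockSize B ∧
      ∃ (m : ℕ) (C : Matrix (Fin m) (Fin N) ℝ) (e : Fin m → ℝ)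
        (π : (Fin N → ℝ) →ₗ[ℝ] (Fin n → F2 d → ℝ)),
        π '' { y : Fin N → ℝ | (∀ j, 0 ≤ y j) ∧ C.mulVec y = e } = CTP B := by
  obtain ⟨m, C, e, π, hπ⟩ := exists_matrix_image_eq_image_supportedPolyhedron (flowArcs B)
    (outflow - inflow) unitDemand flowProj
  exact ⟨_, (card_flowArcs B).le, m, C, e, π, hπ.trans (flowProj_image_flowPolytope B)⟩

/-- `CTP[B]` has an extended formulation of size at most
`2^rank(B) · size(B)`. -/
theorem statement15 (d n : ℕ) (hn : 2 ≤ n) (B : Fin n → Set (F2 d))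
    (hB : ∀ i, (B i).Nonempty) :
    ∃ N : ℕ, N ≤ 2 ^ blockRank B * blockSize B ∧
      ∃ (m : ℕ) (C : Matrix (Fin m) (Fin N) ℝ) (e : Fin m → ℝ)
        (π : (Fin N → ℝ) →ₗ[ℝ] (Fin n → F2 d → ℝ)),
        π '' { y : Fin N → ℝ | (∀ j, 0 ≤ y j) ∧ C.mulVec y = e } = CTP B :=
  statement15_general d n B
end

section
/- For every block configuration B in 𝔽₂^d, the rank-1 relaxation of CTP[B] is exactly the subset of the transversal polytope cut out by the lifted odd-set inequalities: RP[B][1] = { x ∈ TP[B] : x satisfies the LOS inequality associated with η and I for every nonzero η ∈ 𝔽₂^d and every I ⊆ [n] of odd cardinality }. -/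
open scoped Classical

/-- The `φ`-induced map `Φ` (w.r.t. the block configuration `B`):
`Φ(x)^i_{ω'} = Σ_{ω ∈ B(i), φ(ω) = ω'} x^i_ω`. -/
noncomputable def indMap {d d' n : ℕ} (B : Fin n → Set (F2 d)) (φ : F2 d →ₗ[ZMod 2] F2 d')
    (x : Fin n → F2 d → ℝ) : Fin n → F2 d' → ℝ :=
  fun i ω' => ∑ ω ∈ Finset.univ.filter (fun ω : F2 d => ω ∈ B i ∧ φ ω = ω'), x i ω

/-- The `φ`-relaxation `RP[B][φ]` of `CTP[B]`. -/
noncomputable def RP {d d' n : ℕ} (B : Fin n → Set (F2 d)) (φ : F2 d →ₗ[ZMod 2] F2 d') :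
    Set (Fin n → F2 d → ℝ) :=
  { x ∈ TP B | indMap B φ x ∈ CTP (fun i => φ '' B i) }

/-- The rank-`r` relaxation `RP[B][r]` of `CTP[B]`: the intersection of the `φ`-relaxations
over all linear maps `φ` with domain `𝔽₂^d` whose image has dimension at most `r`. -/
noncomputable def RPr {d n : ℕ} (B : Fin n → Set (F2 d)) (r : ℕ) :
    Set (Fin n → F2 d → ℝ) :=
  ⋂ (d' : ℕ), ⋂ (φ : F2 d →ₗ[ZMod 2] F2 d'),
    ⋂ (_ : Module.finrank (ZMod 2) (LinearMap.range φ) ≤ r), RP B φ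


/-!
Let `φ` have rank at most one. Its image lies in `{0, v}` with `v = φ ω₀`, so a point `y` of
`TP[φ(B)]` is determined by `b i = y^i_v`, and the cyclic transversals of `φ(B)` are the
transversals equal to `v` exactly on an even set `S`. Pulling back a functional `η'` with
`η' · v = 1` along `φ`, the LOS inequalities become the odd-set inequalities
`∑_{i ∈ I} (1 - b i) + ∑_{i ∉ I} b i ≥ 1`, so `⊇` is Jeroslow's description of the parity
polytope, with some coordinates fixed to `0` or `1` by the blocks. By Krein–Milman it suffices
that extreme points are integral. Adding two tight odd-set inequalities, every coordinate where
the two sets disagree contributes exactly `1`, and there is an even, positive number of those;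
hence two tight odd sets that agree at a fractional coordinate agree everywhere. So with two
fractional coordinates `j, k` one can move along `e_j ± e_k` keeping every tight inequality
tight, while a single fractional coordinate violates the inequality for `{b = 1}` or
`{b = 1} ∪ {j}`.

For `⊆`, every LOS inequality is valid for every CTP, since a cyclic transversal has an even
number of entries with `η · ξ(i) = 1`, and LOS inequalities pull back along the rank-one map
`ω ↦ η · ω`.
-/

open Finset Filter Topology

theorem eq_zero_of_mem_extremePoints_of_eventually {E : Type*} [AddCommGroup E] [Module ℝ E]
    {A : Set E} {e p : E} (he : e ∈ A.extremePoints ℝ)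
    (hp : ∀ᶠ t in 𝓝 (0 : ℝ), e + t • p ∈ A) : p = 0 := by
  obtain ⟨ε, hε, hball⟩ := Metric.eventually_nhds_iff.mp hp
  have hpos : e + (ε / 2) • p ∈ A :=
    hball (by rw [Real.dist_0_eq_abs, abs_of_pos (by positivity)]; linarith)
  have hneg : e + (-(ε / 2)) • p ∈ A :=
    hball (by rw [Real.dist_0_eq_abs, abs_neg, abs_of_pos (by positivity)]; linarith)
  have hseg : e ∈ openSegment ℝ (e + (ε / 2) • p) (e + (-(ε / 2)) • p) :=
    ⟨1 / 2, 1 / 2, by norm_num, by norm_num, by norm_num, by module⟩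
  have := ((mem_extremePoints.mp he).2 _ hpos _ hneg hseg).1
  simpa [hε.ne'] using this

section OddSetPolytope

variable {ι : Type*} [Fintype ι] [DecidableEq ι]

def oddSetLHS (b : ι → ℝ) (I : Finset ι) : ℝ :=
  ∑ i, if i ∈ I then 1 - b i else b i

def oddSetPolytope (lo hi : ι → ℝ) : Set (ι → ℝ) :=
  {b | b ∈ Set.Icc lo hi ∧ ∀ I : Finset ι, Odd #I → 1 ≤ oddSetLHS b I}

def evenIndicators : Set (ι → ℝ) :=
  (fun S : Finset ι => fun i => if i ∈ S then 1 else 0) '' {S | Even #S}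

theorem oddSetLHS_eq_sum_add_sum (b : ι → ℝ) (I : Finset ι) :
    oddSetLHS b I = ∑ i ∈ I, (1 - b i) + ∑ i ∈ Iᶜ, b i := by
  rw [oddSetLHS, sum_ite, filter_mem_eq_inter, univ_inter, filter_notMem_eq_sdiff,
    ← compl_eq_univ_sdiff]

theorem oddSetLHS_add_smul (e p : ι → ℝ) (t : ℝ) (I : Finset ι) :
    oddSetLHS (e + t • p) I = oddSetLHS e I + t * ∑ i, (if i ∈ I then -1 else 1) * p i := by
  simp only [oddSetLHS, mul_sum, ← sum_add_distrib, Pi.add_apply, Pi.smul_apply, smul_eq_mul]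
  refine sum_congr rfl fun i _ => ?_
  split_ifs <;> ring

theorem oddSetLHS_smul_add_smul {x y : ι → ℝ} {a b : ℝ} (hab : a + b = 1) (I : Finset ι) :
    oddSetLHS (a • x + b • y) I = a * oddSetLHS x I + b * oddSetLHS y I := by
  simp only [oddSetLHS, mul_sum, ← sum_add_distrib, Pi.add_apply, Pi.smul_apply, smul_eq_mul]
  refine sum_congr rfl fun i _ => ?_
  split_ifs
  · linear_combination -hab
  · ring

theorem convex_oddSetPolytope (lo hi : ι → ℝ) : Convex ℝ (oddSetPolytope lo hi) := by
  refine (convex_Icc lo hi).inter fun x hx y hy a b ha hb hab I hI => ?_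
  rw [oddSetLHS_smul_add_smul hab]
  nlinarith [hx I hI, hy I hI]

theorem isClosed_oddSetPolytope (lo hi : ι → ℝ) : IsClosed (oddSetPolytope lo hi) := by
  refine isClosed_Icc.inter (?_ : IsClosed {b | ∀ I : Finset ι, Odd #I → 1 ≤ oddSetLHS b I})
  simp only [Set.ofPred_forall]
  exact isClosed_iInter fun I => isClosed_iInter fun _ => isClosed_le continuous_const <|
    continuous_finsetSum _ fun i _ => by split_ifs <;> fun_prop

theorem exists_odd_oddSetLHS_lt_one {e : ι → ℝ} {j : ι} (hj : e j ∈ Set.Ioo 0 1)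
    (hint : ∀ i ≠ j, e i = 0 ∨ e i = 1) : ∃ I : Finset ι, Odd #I ∧ oddSetLHS e I < 1 := by
  set S := univ.filter fun i => e i = 1
  have hjS : j ∉ S := by simp [S, hj.2.ne]
  have key : ∀ I : Finset ι, (∀ i ≠ j, i ∈ I ↔ i ∈ S) → oddSetLHS e I < 1 := by
    intro I hI
    rw [oddSetLHS, sum_eq_single j]
    · split_ifs <;> linarith [hj.1, hj.2]
    · intro i _ hij
      rcases hint i hij with h | h <;> simp [S, h, hI i hij]
    · simp
  rcases Nat.even_or_odd #S with hS | hS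
  · refine ⟨insert j S, ?_, key _ fun i hij => by simp [hij]⟩
    rw [card_insert_of_notMem hjS]
    exact hS.add_one
  · exact ⟨S, hS, key S fun _ _ => Iff.rfl⟩

theorem mem_iff_mem_of_oddSetLHS_eq_one {e : ι → ℝ} (he : ∀ i, e i ∈ Set.Icc 0 1)
    {I₁ I₂ : Finset ι} (hI₁ : Odd #I₁) (hI₂ : Odd #I₂)
    (h₁ : oddSetLHS e I₁ = 1) (h₂ : oddSetLHS e I₂ = 1)
    {m : ι} (hm : e m ∈ Set.Ioo 0 1) (hmI : m ∈ I₁ ↔ m ∈ I₂) (k : ι) : k ∈ I₁ ↔ k ∈ I₂ := by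
  by_contra hk
  set g : ι → ℝ := fun i =>
    (if i ∈ I₁ then 1 - e i else e i) + (if i ∈ I₂ then 1 - e i else e i)
  set D := I₁ \ I₂ ∪ I₂ \ I₁
  have hg_sum : ∑ i, g i = 2 := by
    rw [sum_add_distrib, ← oddSetLHS, ← oddSetLHS, h₁, h₂]
    norm_num
  have hg_nonneg : ∀ i, 0 ≤ g i := fun i => by
    have := he i
    simp only [g]
    split_ifs <;> linarith [this.1, this.2]
  have hgD : ∀ i ∈ D, g i = 1 := fun i hi => by
    rcases mem_union.mp hi with hi | hi <;> obtain ⟨h, h'⟩ := mem_sdiff.mp hi <;> simp [g, h, h']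
  have hgm : 0 < g m := by
    simp only [g]
    split_ifs <;> linarith [hm.1, hm.2]
  have hmD : m ∉ D := by simp [D]; tauto
  have hD : 2 ≤ #D := by
    have hkD : k ∈ D := by simp [D]; tauto
    have hcard : #D = #(I₁ \ I₂) + #(I₂ \ I₁) := card_union_of_disjoint disjoint_sdiff_sdiff
    have h₁ := card_sdiff_add_card_inter I₁ I₂
    have h₂ := card_sdiff_add_card_inter I₂ I₁
    rw [inter_comm] at h₂
    have := card_pos.mpr ⟨k, hkD⟩
    obtain ⟨a, ha⟩ := hI₁
    obtain ⟨b, hb⟩ := hI₂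
    omega
  have hsum_D : ∑ i ∈ insert m D, g i = g m + #D := by
    rw [sum_insert hmD, sum_congr rfl hgD, sum_const, nsmul_one]
  have hle : ∑ i ∈ insert m D, g i ≤ ∑ i, g i :=
    sum_le_sum_of_subset_of_nonneg (subset_univ _) fun i _ _ => hg_nonneg i
  have : (2 : ℝ) ≤ #D := by exact_mod_cast hD
  linarith

theorem eventually_add_smul_mem_oddSetPolytope {lo hi e p : ι → ℝ}
    (he : e ∈ oddSetPolytope lo hi) (hbox : ∀ i, p i = 0 ∨ e i ∈ Set.Ioo (lo i) (hi i))
    (htight : ∀ I : Finset ι, Odd #I → oddSetLHS e I = 1 →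
      ∑ i, (if i ∈ I then -1 else 1) * p i = 0) :
    ∀ᶠ t in 𝓝 (0 : ℝ), e + t • p ∈ oddSetPolytope lo hi := by
  have hline : ∀ a b : ℝ, Tendsto (fun t : ℝ => a + t * b) (𝓝 0) (𝓝 a) := fun a b =>
    (by fun_prop : Continuous fun t : ℝ => a + t * b).tendsto' 0 a (by simp)
  have hIcc : ∀ᶠ t in 𝓝 (0 : ℝ), ∀ i, e i + t * p i ∈ Set.Icc (lo i) (hi i) := by
    refine eventually_all.2 fun i => ?_
    rcases hbox i with h | h
    · exact Eventually.of_forall fun t => by simpa [h] using ⟨he.1.1 i, he.1.2 i⟩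
    · exact ((hline _ _).eventually (Ioo_mem_nhds h.1 h.2)).mono
        fun _ ht => Set.Ioo_subset_Icc_self ht
  have hodd : ∀ᶠ t in 𝓝 (0 : ℝ), ∀ I : Finset ι, Odd #I → 1 ≤ oddSetLHS (e + t • p) I := by
    refine eventually_all.2 fun I => ?_
    simp_rw [oddSetLHS_add_smul]
    by_cases hI : Odd #I
    · rcases (he.2 I hI).eq_or_lt with h | h
      · exact Eventually.of_forall fun t _ => by rw [htight I hI h.symm, ← h]; simp
      · exact ((hline _ _).eventually_const_lt h).mono fun t ht _ => ht.le
    · exact Eventually.of_forall fun t h => absurd h hI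
  filter_upwards [hIcc, hodd] with t hbox hodd
  exact ⟨⟨fun i => (hbox i).1, fun i => (hbox i).2⟩, hodd⟩

theorem mem_Icc_zero_one_of_mem_oddSetPolytope {lo hi e : ι → ℝ}
    (hlo : ∀ i, lo i = 0 ∨ lo i = 1) (hhi : ∀ i, hi i = 0 ∨ hi i = 1)
    (he : e ∈ oddSetPolytope lo hi) (i : ι) : e i ∈ Set.Icc 0 1 := by
  have := he.1.1 i
  have := he.1.2 i
  constructor <;> rcases hlo i with h | h <;> rcases hhi i with h' | h' <;> linarith

theorem not_fractional_pair_of_mem_extremePoints {lo hi e : ι → ℝ}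
    (hlo : ∀ i, lo i = 0 ∨ lo i = 1) (hhi : ∀ i, hi i = 0 ∨ hi i = 1)
    (he : e ∈ (oddSetPolytope lo hi).extremePoints ℝ) {j k : ι} (hjk : j ≠ k)
    (hj : e j ∈ Set.Ioo 0 1) (hk : e k ∈ Set.Ioo 0 1) : False := by
  have h01 := mem_Icc_zero_one_of_mem_oddSetPolytope hlo hhi he.1
  have hfree : ∀ i, e i ∈ Set.Ioo 0 1 → e i ∈ Set.Ioo (lo i) (hi i) := fun i hi' => by
    have := he.1.1.1 i; have := he.1.1.2 i
    constructor <;> rcases hlo i with h | h <;> rcases hhi i with h' | h' <;>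
      linarith [hi'.1, hi'.2]
  -- all tight odd sets separate `j` and `k`, or none does
  obtain ⟨τ, hτ⟩ : ∃ τ : ℝ, ∀ I : Finset ι, Odd #I → oddSetLHS e I = 1 →
      (if j ∈ I then -1 else 1) + τ * (if k ∈ I then -1 else 1) = 0 := by
    by_cases hsep : ∃ I₀ : Finset ι, Odd #I₀ ∧ oddSetLHS e I₀ = 1 ∧ ¬(j ∈ I₀ ↔ k ∈ I₀)
    · obtain ⟨I₀, hI₀, hI₀t, hI₀s⟩ := hsep
      refine ⟨1, fun I hI hIt => ?_⟩
      have hj' := fun h => mem_iff_mem_of_oddSetLHS_eq_one h01 hI₀ hI hI₀t hIt hj h k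
      have hk' := fun h => mem_iff_mem_of_oddSetLHS_eq_one h01 hI₀ hI hI₀t hIt hk h j
      split_ifs <;> first | (norm_num; done) | tauto
    · refine ⟨-1, fun I hI hIt => ?_⟩
      have : j ∈ I ↔ k ∈ I := by_contra fun h => hsep ⟨I, hI, hIt, h⟩
      split_ifs <;> first | (norm_num; done) | tauto
  have hp := eq_zero_of_mem_extremePoints_of_eventually he
    (p := Pi.single j 1 + τ • Pi.single k 1) <| eventually_add_smul_mem_oddSetPolytope he.1
      (fun i => by
        by_cases hij : i = j
        · exact .inr (hij ▸ hfree j hj)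
        by_cases hik : i = k
        · exact .inr (hik ▸ hfree k hk)
        · exact .inl (by simp [hij, hik]))
      (fun I hI hIt => by
        simpa [mul_add, sum_add_distrib, Pi.single_apply] using hτ I hI hIt)
  simpa [hjk] using congrFun hp j

theorem extremePoints_oddSetPolytope_subset {lo hi : ι → ℝ}
    (hlo : ∀ i, lo i = 0 ∨ lo i = 1) (hhi : ∀ i, hi i = 0 ∨ hi i = 1) :
    (oddSetPolytope lo hi).extremePoints ℝ ⊆ evenIndicators ∩ Set.Icc lo hi := by
  intro e he
  obtain ⟨hbox, hodd⟩ := he.1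
  have hfrac : ∀ i, e i ≠ 0 → e i ≠ 1 → e i ∈ Set.Ioo 0 1 := fun i h0 h1 =>
    have h01 := mem_Icc_zero_one_of_mem_oddSetPolytope hlo hhi he.1 i
    ⟨h01.1.lt_of_ne' h0, h01.2.lt_of_ne h1⟩
  have hint : ∀ i, e i = 0 ∨ e i = 1 := by
    by_contra! h
    obtain ⟨j, hj0, hj1⟩ := h
    obtain ⟨I, hI, hlt⟩ := exists_odd_oddSetLHS_lt_one (hfrac j hj0 hj1) fun i hij => by
      by_contra! h
      exact not_fractional_pair_of_mem_extremePoints hlo hhi he hij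
        (hfrac i h.1 h.2) (hfrac j hj0 hj1)
    exact (hodd I hI).not_gt hlt
  set S := univ.filter fun i => e i = 1
  have heS : e = fun i => if i ∈ S then 1 else 0 := funext fun i => by
    rcases hint i with h | h <;> simp [S, h]
  refine ⟨⟨S, ?_, heS.symm⟩, hbox⟩
  by_contra hS
  have hzero : oddSetLHS e S = 0 :=
    sum_eq_zero fun i _ => by rcases hint i with h | h <;> simp [S, h]
  have := hodd S (Nat.not_even_iff_odd.mp hS)
  linarith

theorem oddSetPolytope_subset_convexHull {lo hi : ι → ℝ}
    (hlo : ∀ i, lo i = 0 ∨ lo i = 1) (hhi : ∀ i, hi i = 0 ∨ hi i = 1) :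
    oddSetPolytope lo hi ⊆ convexHull ℝ (evenIndicators ∩ Set.Icc lo hi) := by
  have hfin : (evenIndicators ∩ Set.Icc lo hi : Set (ι → ℝ)).Finite :=
    ((Set.toFinite _).image _).inter_of_left _
  have hcompact : IsCompact (oddSetPolytope lo hi) :=
    isCompact_Icc.of_isClosed_subset (isClosed_oddSetPolytope lo hi) fun _ hb => hb.1
  calc oddSetPolytope lo hi
      = closure (convexHull ℝ ((oddSetPolytope lo hi).extremePoints ℝ)) :=
        (closure_convexHull_extremePoints hcompact (convex_oddSetPolytope lo hi)).symm
    _ ⊆ closure (convexHull ℝ (evenIndicators ∩ Set.Icc lo hi)) :=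
        closure_mono (convexHull_mono (extremePoints_oddSetPolytope_subset hlo hhi))
    _ = convexHull ℝ (evenIndicators ∩ Set.Icc lo hi) :=
        (hfin.isCompact_convexHull ℝ).isClosed.closure_eq

end OddSetPolytope

section BlockConfiguration

variable {d d' n : ℕ}

theorem zmod_two_eq_zero_or_one (a : ZMod 2) : a = 0 ∨ a = 1 := by
  revert a
  decide

theorem sum_eq_one_of_mem_TP {C : Fin n → Set (F2 d)} {y : Fin n → F2 d → ℝ} (hy : y ∈ TP C)
    {i : Fin n} {s : Finset (F2 d)} (hs : C i ⊆ s) : ∑ ω ∈ s, y i ω = 1 := by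
  rw [← hy.2.2 i]
  exact sum_subset (subset_univ s) fun ω _ hω => hy.2.1 i ω fun h => hω (hs h)

theorem nonempty_of_mem_TP {C : Fin n → Set (F2 d)} {y : Fin n → F2 d → ℝ} (hy : y ∈ TP C)
    (i : Fin n) : (C i).Nonempty := by
  by_contra h
  have := sum_eq_one_of_mem_TP hy (s := ∅) (by simpa [Set.not_nonempty_iff_eq_empty] using h)
  simp at this

theorem indMap_mem_TP {B : Fin n → Set (F2 d)} {x : Fin n → F2 d → ℝ} (hx : x ∈ TP B)
    (φ : F2 d →ₗ[ZMod 2] F2 d') : indMap B φ x ∈ TP (fun i => φ '' B i) := by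
  refine ⟨fun i ω' => sum_nonneg fun ω _ => hx.1 i ω, fun i ω' hω' => ?_, fun i => ?_⟩
  · refine sum_eq_zero fun ω hω => absurd ?_ hω'
    obtain ⟨hωB, rfl⟩ := (mem_filter.mp hω).2
    exact ⟨ω, hωB, rfl⟩
  · simp only [indMap, ← filter_filter]
    rw [sum_fiberwise, sum_filter_of_ne fun ω _ hω => by_contra fun h => hω (hx.2.1 i ω h)]
    exact hx.2.2 i

theorem sum_indMap_filter {B : Fin n → Set (F2 d)} (φ : F2 d →ₗ[ZMod 2] F2 d') {η : F2 d}
    {η' : F2 d'} (hη : ∀ ω, η' ⬝ᵥ φ ω = η ⬝ᵥ ω) (x : Fin n → F2 d → ℝ) (i : Fin n) (c : ZMod 2) :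
    ∑ ω' ∈ univ.filter (fun ω' => ω' ∈ φ '' B i ∧ η' ⬝ᵥ ω' = c), indMap B φ x i ω' =
      ∑ ω ∈ univ.filter (fun ω => ω ∈ B i ∧ η ⬝ᵥ ω = c), x i ω := by
  rw [← sum_fiberwise_of_maps_to (g := φ) fun ω hω => ?_]
  · refine sum_congr rfl fun ω' hω' => sum_congr ?_ fun _ _ => rfl
    ext ω
    simp only [mem_filter, mem_univ, true_and] at hω' ⊢
    constructor
    · rintro ⟨hωB, rfl⟩
      exact ⟨⟨hωB, hη ω ▸ hω'.2⟩, rfl⟩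
    · rintro ⟨⟨hωB, -⟩, hωω'⟩
      exact ⟨hωB, hωω'⟩
  · simp only [mem_filter, mem_univ, true_and] at hω ⊢
    exact ⟨⟨ω, hω.1, rfl⟩, (hη ω).trans hω.2⟩

theorem losLHS_indMap {B : Fin n → Set (F2 d)} (φ : F2 d →ₗ[ZMod 2] F2 d') {η : F2 d}
    {η' : F2 d'} (hη : ∀ ω, η' ⬝ᵥ φ ω = η ⬝ᵥ ω) (I : Finset (Fin n)) (x : Fin n → F2 d → ℝ) :
    losLHS (fun i => φ '' B i) η' I (indMap B φ x) = losLHS B η I x := by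
  simp only [losLHS, ← dotProduct.eq_1, sum_indMap_filter φ hη]

theorem isLinearMap_losLHS (C : Fin n → Set (F2 d)) (η : F2 d) (I : Finset (Fin n)) :
    IsLinearMap ℝ (losLHS C η I) where
  map_add x y := by simp only [losLHS, Pi.add_apply, sum_add_distrib]; ring
  map_smul c x := by simp only [losLHS, Pi.smul_apply, smul_eq_mul, ← mul_sum]; ring

theorem losLHS_incVec {C : Fin n → Set (F2 d)} {ξ : Fin n → F2 d} (hξ : ∀ i, ξ i ∈ C i)
    (η : F2 d) (I : Finset (Fin n)) :
    losLHS C η I (incVec ξ) = #{i ∈ I | η ⬝ᵥ ξ i = 0} + #{i ∈ Iᶜ | η ⬝ᵥ ξ i = 1} := by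
  simp [losLHS, incVec, ← dotProduct.eq_1, hξ, sum_boole]

theorem exists_dotProduct_mismatch_of_sum_eq_zero {ξ : Fin n → F2 d} (hξ : ∑ i, ξ i = 0)
    {I : Finset (Fin n)} (hI : Odd #I) (η : F2 d) :
    ∃ i, (i ∈ I ∧ η ⬝ᵥ ξ i = 0) ∨ (i ∉ I ∧ η ⬝ᵥ ξ i = 1) := by
  by_contra! h
  have hval : ∀ i, η ⬝ᵥ ξ i = if i ∈ I then 1 else 0 := fun i => by
    have := h i
    split_ifs with hi <;> rcases zmod_two_eq_zero_or_one (η ⬝ᵥ ξ i) with h' | h' <;> simp_all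
  have := congrArg (η ⬝ᵥ ·) hξ
  simp only [dotProduct_sum, hval, sum_ite_mem, univ_inter, sum_const, nsmul_eq_mul, mul_one,
    dotProduct_zero] at this
  exact ZMod.natCast_ne_zero_iff_odd.mpr hI this

theorem one_le_losLHS_of_mem_CTP {C : Fin n → Set (F2 d)} (η : F2 d) {I : Finset (Fin n)}
    (hI : Odd #I) {y : Fin n → F2 d → ℝ} (hy : y ∈ CTP C) : 1 ≤ losLHS C η I y := by
  refine convexHull_min ?_ (convex_halfSpace_ge (isLinearMap_losLHS C η I) 1) hy
  rintro _ ⟨ξ, ⟨hξC, hξ⟩, rfl⟩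
  rw [Set.mem_ofPred_eq, losLHS_incVec hξC]
  norm_cast
  obtain ⟨i, ⟨hi, hc⟩ | ⟨hi, hc⟩⟩ := exists_dotProduct_mismatch_of_sum_eq_zero hξ hI η
  · have : 0 < #{j ∈ I | η ⬝ᵥ ξ j = 0} := card_pos.mpr ⟨i, by simp [hi, hc]⟩
    omega
  · have : 0 < #{j ∈ Iᶜ | η ⬝ᵥ ξ j = 1} := card_pos.mpr ⟨i, by simp [hi, hc]⟩
    omega

theorem exists_forall_eq_zero_or_eq_of_finrank_range_le_one {φ : F2 d →ₗ[ZMod 2] F2 d'}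
    (hφ : Module.finrank (ZMod 2) (LinearMap.range φ) ≤ 1) :
    ∃ ω₀, ∀ ω, φ ω = 0 ∨ φ ω = φ ω₀ := by
  obtain ⟨⟨_, ω₀, rfl⟩, hv⟩ := finrank_le_one_iff.mp hφ
  refine ⟨ω₀, fun ω => ?_⟩
  obtain ⟨c, hc⟩ := hv ⟨φ ω, ω, rfl⟩
  rcases zmod_two_eq_zero_or_one c with rfl | rfl
  · left; simpa [eq_comm] using congrArg Subtype.val hc
  · right; simpa [eq_comm] using congrArg Subtype.val hc

theorem mem_CTP_of_forall_subset_zero {C : Fin n → Set (F2 d)} (hC : ∀ i, C i ⊆ {0})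
    {y : Fin n → F2 d → ℝ} (hy : y ∈ TP C) : y ∈ CTP C := by
  have hy0 : y = incVec 0 := by
    ext i ω
    by_cases hω : ω = 0
    · subst hω
      simpa [incVec] using sum_eq_one_of_mem_TP hy (s := {0}) (by simpa using hC i)
    · simpa [incVec, Ne.symm hω] using hy.2.1 i ω fun h => hω (hC i h)
  rw [hy0]
  refine subset_convexHull ℝ _ ⟨0, ⟨fun i => ?_, by simp⟩, rfl⟩
  obtain ⟨ω, hω⟩ := nonempty_of_mem_TP hy i
  rwa [Pi.zero_apply, ← Set.mem_singleton_iff.mp (hC i hω)]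

theorem apply_zero_add_apply_eq_one {C : Fin n → Set (F2 d)} {v : F2 d} (hv : v ≠ 0)
    (hC : ∀ i, C i ⊆ {0, v}) {y : Fin n → F2 d → ℝ} (hy : y ∈ TP C) (i : Fin n) :
    y i 0 + y i v = 1 := by
  simpa [sum_pair hv.symm] using sum_eq_one_of_mem_TP hy (s := {0, v}) (by simpa using hC i)

-- In block `i`, `liftPair v b` puts `b i` on `v` and `1 - b i` on `0`.
noncomputable def liftPair (v : F2 d) : (Fin n → ℝ) →ᵃ[ℝ] (Fin n → F2 d → ℝ) :=
  AffineMap.pi fun i =>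
    (AffineMap.lineMap (incVec (0 : Fin n → F2 d) i) (incVec (fun _ => v) i)).comp
      (AffineMap.proj i)

theorem liftPair_indicator (v : F2 d) (S : Finset (Fin n)) :
    liftPair v (fun i => if i ∈ S then 1 else 0) = incVec (fun i => if i ∈ S then v else 0) := by
  ext i ω
  by_cases hi : i ∈ S <;> simp [liftPair, hi, incVec]

theorem liftPair_eq {C : Fin n → Set (F2 d)} {v : F2 d} (hv : v ≠ 0) (hC : ∀ i, C i ⊆ {0, v})
    {y : Fin n → F2 d → ℝ} (hy : y ∈ TP C) : liftPair v (fun i => y i v) = y := by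
  ext i ω
  have hsum := apply_zero_add_apply_eq_one hv hC hy i
  simp only [liftPair, AffineMap.pi_apply, AffineMap.coe_comp, Function.comp_apply,
    AffineMap.proj_apply, AffineMap.lineMap_apply_module]
  by_cases h0 : ω = 0
  · subst h0; simp [incVec, hv]; linarith
  by_cases hv' : ω = v
  · subst hv'; simp [incVec, Ne.symm hv]
  · simpa [incVec, Ne.symm h0, Ne.symm hv'] using
      (hy.2.1 i ω fun h => by rcases hC i h with h | h <;> contradiction).symm

theorem sum_filter_eq_of_forall_subset_pair {C : Fin n → Set (F2 d)} {v η : F2 d}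
    (hηv : η ⬝ᵥ v = 1) (hC : ∀ i, C i ⊆ {0, v}) {y : Fin n → F2 d → ℝ} (hy : y ∈ TP C)
    (i : Fin n) {a : F2 d} (ha : a = 0 ∨ a = v) {c : ZMod 2} (hc : η ⬝ᵥ a = c) :
    ∑ ω ∈ univ.filter (fun ω => ω ∈ C i ∧ η ⬝ᵥ ω = c), y i ω = y i a := by
  rw [sum_eq_single a]
  · intro ω hω hωa
    simp only [mem_filter, mem_univ, true_and] at hω
    have hηω : η ⬝ᵥ ω = η ⬝ᵥ a := hω.2.trans hc.symm
    rcases hC i hω.1 with rfl | rfl <;> rcases ha with rfl | rfl <;> simp [hηv] at hηω hωa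
  · intro ha'
    exact hy.2.1 i a fun h => ha' (by simp [h, hc])

theorem apply_mem_oddSetPolytope {C : Fin n → Set (F2 d)} {v η : F2 d}
    (hηv : η ⬝ᵥ v = 1) (hC : ∀ i, C i ⊆ {0, v}) {y : Fin n → F2 d → ℝ} (hy : y ∈ TP C)
    (hLOS : ∀ I : Finset (Fin n), Odd #I → 1 ≤ losLHS C η I y) :
    (fun i => y i v) ∈ oddSetPolytope (fun i => if 0 ∈ C i then 0 else 1)
      (fun i => if v ∈ C i then 1 else 0) := by
  have hv : v ≠ 0 := by rintro rfl; simp at hηv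
  have hsum : ∀ i, y i 0 = 1 - y i v := fun i =>
    eq_sub_of_add_eq (apply_zero_add_apply_eq_one hv hC hy i)
  have hlos : ∀ I, losLHS C η I y = oddSetLHS (fun i => y i v) I := fun I => by
    simp only [losLHS, ← dotProduct.eq_1, oddSetLHS_eq_sum_add_sum,
      sum_filter_eq_of_forall_subset_pair hηv hC hy _ (.inl rfl) (dotProduct_zero η),
      sum_filter_eq_of_forall_subset_pair hηv hC hy _ (.inr rfl) hηv, hsum]
  refine ⟨⟨fun i => ?_, fun i => ?_⟩, fun I hI => hlos I ▸ hLOS I hI⟩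
  · by_cases h : 0 ∈ C i
    · simpa [h] using hy.1 i v
    · simp only [h, if_false]
      linarith [hsum i, hy.2.1 i 0 h]
  · by_cases h : v ∈ C i
    · simp only [h, if_true]
      linarith [hsum i, hy.1 i 0]
    · simpa [h] using (hy.2.1 i v h).le

theorem liftPair_image_subset (C : Fin n → Set (F2 d)) (v : F2 d) :
    liftPair v '' (evenIndicators ∩ Set.Icc (fun i => if 0 ∈ C i then 0 else 1)
      (fun i => if v ∈ C i then 1 else 0)) ⊆ incVec '' {ξ | IsCyclicTransversal C ξ} := by
  rintro _ ⟨_, ⟨⟨S, hS, rfl⟩, hlo, hhi⟩, rfl⟩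
  refine ⟨fun i => if i ∈ S then v else 0, ⟨fun i => ?_, ?_⟩, (liftPair_indicator v S).symm⟩
  · by_cases hiS : i ∈ S
    · have := hhi i
      simp only [hiS, if_true] at this ⊢
      by_contra h
      norm_num [h] at this
    · have := hlo i
      simp only [hiS, if_false] at this ⊢
      by_contra h
      norm_num [h] at this
  · rw [sum_ite_mem, univ_inter, sum_const, ← Nat.cast_smul_eq_nsmul (ZMod 2),
      (ZMod.natCast_eq_zero_iff_even).mpr hS, zero_smul]

theorem mem_CTP_of_forall_subset_pair {C : Fin n → Set (F2 d)} {v η : F2 d}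
    (hηv : η ⬝ᵥ v = 1) (hC : ∀ i, C i ⊆ {0, v}) {y : Fin n → F2 d → ℝ} (hy : y ∈ TP C)
    (hLOS : ∀ I : Finset (Fin n), Odd #I → 1 ≤ losLHS C η I y) : y ∈ CTP C := by
  have hv : v ≠ 0 := by rintro rfl; simp at hηv
  have hhull := oddSetPolytope_subset_convexHull (fun i => by split_ifs <;> simp)
    (fun i => by split_ifs <;> simp) (apply_mem_oddSetPolytope hηv hC hy hLOS)
  rw [← liftPair_eq hv hC hy]
  refine convexHull_mono (liftPair_image_subset C v) ?_
  rw [← AffineMap.image_convexHull]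
  exact ⟨_, hhull, rfl⟩

theorem indMap_mem_CTP {B : Fin n → Set (F2 d)} {x : Fin n → F2 d → ℝ} (hx : x ∈ TP B)
    (hLOS : ∀ η : F2 d, η ≠ 0 → ∀ I : Finset (Fin n), Odd #I → 1 ≤ losLHS B η I x)
    {φ : F2 d →ₗ[ZMod 2] F2 d'} (hφ : Module.finrank (ZMod 2) (LinearMap.range φ) ≤ 1) :
    indMap B φ x ∈ CTP (fun i => φ '' B i) := by
  obtain ⟨ω₀, hφω₀⟩ := exists_forall_eq_zero_or_eq_of_finrank_range_le_one hφ
  have hy := indMap_mem_TP hx φ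
  have hC : ∀ i, φ '' B i ⊆ {0, φ ω₀} := fun i => by
    rintro _ ⟨ω, -, rfl⟩
    exact hφω₀ ω
  by_cases hv : φ ω₀ = 0
  · exact mem_CTP_of_forall_subset_zero (fun i => by simpa [hv] using hC i) hy
  obtain ⟨j, hj⟩ : ∃ j, φ ω₀ j ≠ 0 := Function.ne_iff.mp hv
  have hη'v : Pi.single j 1 ⬝ᵥ φ ω₀ = 1 := by
    simpa using (zmod_two_eq_zero_or_one _).resolve_left hj
  set η := Matrix.vecMul (Pi.single j 1) (LinearMap.toMatrix' φ)
  have hη : ∀ ω, Pi.single j 1 ⬝ᵥ φ ω = η ⬝ᵥ ω := fun ω => by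
    rw [← LinearMap.toMatrix'_mulVec, Matrix.dotProduct_mulVec]
  refine mem_CTP_of_forall_subset_pair hη'v hC hy fun I hI => ?_
  rw [losLHS_indMap φ hη]
  refine hLOS η (fun hη0 => ?_) I hI
  have := hη ω₀
  rw [hη'v, hη0, zero_dotProduct] at this
  exact one_ne_zero this

theorem mem_RP_of_mem_RPr {B : Fin n → Set (F2 d)} {x : Fin n → F2 d → ℝ} {r : ℕ}
    (hx : x ∈ RPr B r) (φ : F2 d →ₗ[ZMod 2] F2 d')
    (hφ : Module.finrank (ZMod 2) (LinearMap.range φ) ≤ r) : x ∈ RP B φ := by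
  simp only [RPr, Set.mem_iInter] at hx
  exact hx d' φ hφ

theorem one_le_losLHS_of_mem_RPr_one {B : Fin n → Set (F2 d)} {x : Fin n → F2 d → ℝ}
    (hx : x ∈ RPr B 1) (η : F2 d) {I : Finset (Fin n)} (hI : Odd #I) : 1 ≤ losLHS B η I x := by
  let φ : F2 d →ₗ[ZMod 2] F2 1 := Matrix.toLin' (Matrix.of fun _ => η)
  have hφ : Module.finrank (ZMod 2) (LinearMap.range φ) ≤ 1 :=
    (Submodule.finrank_le _).trans (Module.finrank_fin_fun _).le
  have hη : ∀ ω, (fun _ => 1 : F2 1) ⬝ᵥ φ ω = η ⬝ᵥ ω := fun ω => by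
    simp [φ, dotProduct, Matrix.mulVec]
  rw [← losLHS_indMap φ hη]
  exact one_le_losLHS_of_mem_CTP _ hI (mem_RP_of_mem_RPr hx φ hφ).2

end BlockConfiguration

theorem statement18_general (d n : ℕ) (B : Fin n → Set (F2 d)) :
    RPr B 1 = { x ∈ TP B | ∀ (η : F2 d), η ≠ 0 → ∀ I : Finset (Fin n), Odd I.card →
      1 ≤ losLHS B η I x } := by
  ext x
  constructor
  · intro hx
    have hrank : Module.finrank (ZMod 2) (LinearMap.range (0 : F2 d →ₗ[ZMod 2] F2 0)) ≤ 1 := by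
      rw [LinearMap.range_zero, finrank_bot]
      exact zero_le_one
    exact ⟨(mem_RP_of_mem_RPr hx 0 hrank).1,
      fun η _ I hI => one_le_losLHS_of_mem_RPr_one hx η hI⟩
  · rintro ⟨hx, hLOS⟩
    simp only [RPr, Set.mem_iInter]
    exact fun d' φ hφ => ⟨hx, indMap_mem_CTP hx hLOS hφ⟩

/-- the rank-1 relaxation is cut out of the transversal polytope by the LOS
inequalities. -/
theorem statement18 (d n : ℕ) (hn : 2 ≤ n) (B : Fin n → Set (F2 d))
    (hB : ∀ i, (B i).Nonempty) :
    RPr B 1 = { x ∈ TP B | ∀ (η : F2 d), η ≠ 0 → ∀ I : Finset (Fin n), Odd I.card →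
      1 ≤ losLHS B η I x } :=
  statement18_general d n B
end
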